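/- arXiv:1803.00641 — 13 statements merged into one kernel-verified Lean document; each statement's English description precedes it below -/
import Mathlib

section
/- Let X be a real normed space, S ⊆ X a nonempty convex set, and b : X → ℝ convex on S. Define the modulus of uniform convexity ψ : [0,∞) → [0,∞] of b on S by ψ(t) := inf{ (λ b(x) + (1−λ) b(y) − b(λx + (1−λ)y)) / (λ(1−λ)) : x, y ∈ S, ‖x − y‖ = t, λ ∈ (0,1) }, with inf ∅ := ∞ (by convexity the infimand is nonnegative, so ψ takes values in [0,∞]). Then: (a) ψ(ct) ≥ c² ψ(t) for all c ≥ 1 and t ≥ 0; (b) ψ(ct) ≤ c² ψ(t) for all c ∈ (0,1) and t ≥ 0; (c) the function t ↦ ψ(t)/t² is nondecreasing on (0,∞); (d) ψ is nondecreasing on [0,∞). -/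
/-!
Along a segment, `convexityGap b x y l` is `‖x - y‖²` times the second divided difference of `b`
at the collinear points `y`, `l • x + (1 - l) • y`, `x`, and a second divided difference is a
convex combination of those of sub-triples. Concretely, for `1/2 < d < 1`, `d²` times the gap of
`(x, y, l)` is a convex combination of the gaps of three sub-triples of span `d * ‖x - y‖`, so
one of those is at most `d²` times the original gap. Every ratio `c ∈ (0, 1)` is a power of some
`d ∈ (1/2, 1)`, which gives (b); (a), (c) and (d) are rescalings of (b).
-/

open scoped ENNReal

noncomputable def convexityGap {X : Type*} [AddCommGroup X] [Module ℝ X]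
    (b : X → ℝ) (x y : X) (l : ℝ) : ℝ :=
  (l * b x + (1 - l) * b y - b (l • x + (1 - l) • y)) / (l * (1 - l))

noncomputable def uniformConvexityModulus {X : Type*} [NormedAddCommGroup X] [NormedSpace ℝ X]
    (S : Set X) (b : X → ℝ) (t : ℝ) : ℝ≥0∞ :=
  sInf { r : ℝ≥0∞ | ∃ x ∈ S, ∃ y ∈ S, ∃ l ∈ Set.Ioo (0:ℝ) 1, ‖x - y‖ = t ∧
    r = ENNReal.ofReal (convexityGap b x y l) }

section ConvexityGap

variable {X : Type*} [AddCommGroup X] [Module ℝ X] (b : X → ℝ)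

lemma convexityGap_swap (x y : X) (l : ℝ) :
    convexityGap b x y l = convexityGap b y x (1 - l) := by
  have h : (1 - l) • y + l • x = l • x + (1 - l) • y := add_comm _ _
  simp only [convexityGap, sub_sub_cancel, h]
  ring

lemma convexityGap_self (x : X) (l : ℝ) : convexityGap b x x l = 0 := by
  rw [convexityGap, ← add_smul, add_sub_cancel, one_smul, ← add_mul, add_sub_cancel, one_mul,
    sub_self, zero_div]

/-- With `P s := s • x + (1 - s) • y`, the three sub-triples are `(y, P l, P d)`,
`(y, P (1 - d), P d)` and `(P (1 - d), P d, x)`. -/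
lemma convexityGap_decomposition (x y : X) {d l : ℝ} (hl : 0 < l) (hld : l < d)
    (hd : 1 / 2 < d) (hd1 : d < 1) :
    (d - l) / (1 - l) * convexityGap b (d • x + (1 - d) • y) y (l / d)
      + (1 - d) ^ 2 / (1 - l) * convexityGap b (d • x + (1 - d) • y) y ((1 - d) / d)
      + d * (1 - d) / (1 - l) * convexityGap b x ((1 - d) • x + d • y) ((2 * d - 1) / d)
      = d ^ 2 * convexityGap b x y l := by
  have hd0 : d ≠ 0 := by linarith
  have hP_l : (l / d) • (d • x + (1 - d) • y) + (1 - l / d) • y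
      = l • x + (1 - l) • y := by
    match_scalars <;> field_simp; ring
  have hP_1d : ((1 - d) / d) • (d • x + (1 - d) • y) + (1 - (1 - d) / d) • y
      = (1 - d) • x + d • y := by
    match_scalars <;> field_simp; ring
  have hP_d : ((2 * d - 1) / d) • x + (1 - (2 * d - 1) / d) • ((1 - d) • x + d • y)
      = d • x + (1 - d) • y := by
    match_scalars <;> (field_simp; ring)
  have e1 : 1 - l / d = (d - l) / d := by field_simp
  have e2 : 1 - (1 - d) / d = (2 * d - 1) / d := by field_simp; ring
  have e3 : 1 - (2 * d - 1) / d = (1 - d) / d := by field_simp; ring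
  have h1l : 1 - l ≠ 0 := by linarith
  have hdl : d - l ≠ 0 := by linarith
  have h1d : 1 - d ≠ 0 := by linarith
  have h2d : d * 2 - 1 ≠ 0 := by linarith
  simp only [convexityGap]
  rw [hP_l, hP_1d, hP_d, e1, e2, e3]
  field_simp
  ring

end ConvexityGap

section Scaling

variable {X : Type*} [NormedAddCommGroup X] [NormedSpace ℝ X] {S : Set X} {b : X → ℝ}

def ScalesConvexityGap (S : Set X) (b : X → ℝ) (c : ℝ) : Prop :=
  ∀ x ∈ S, ∀ y ∈ S, ∀ l ∈ Set.Ioo (0:ℝ) 1, ∃ u ∈ S, ∃ v ∈ S, ∃ m ∈ Set.Ioo (0:ℝ) 1,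
    ‖u - v‖ = c * ‖x - y‖ ∧ convexityGap b u v m ≤ c ^ 2 * convexityGap b x y l

lemma scalesConvexityGap_one : ScalesConvexityGap S b 1 :=
  fun x hx y hy l hl => ⟨x, hx, y, hy, l, hl, (one_mul _).symm, by rw [one_pow, one_mul]⟩

lemma ScalesConvexityGap.mul {c d : ℝ} (hc : ScalesConvexityGap S b c)
    (hd : ScalesConvexityGap S b d) : ScalesConvexityGap S b (c * d) := by
  intro x hx y hy l hl
  obtain ⟨u, hu, v, hv, m, hm, huv, hgap⟩ := hc x hx y hy l hl
  obtain ⟨u', hu', v', hv', m', hm', huv', hgap'⟩ := hd u hu v hv m hm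
  refine ⟨u', hu', v', hv', m', hm', by rw [huv', huv, mul_assoc, mul_left_comm], ?_⟩
  calc convexityGap b u' v' m' ≤ d ^ 2 * convexityGap b u v m := hgap'
    _ ≤ d ^ 2 * (c ^ 2 * convexityGap b x y l) := by gcongr
    _ = (c * d) ^ 2 * convexityGap b x y l := by ring

lemma ScalesConvexityGap.pow {d : ℝ} (hd : ScalesConvexityGap S b d) (n : ℕ) :
    ScalesConvexityGap S b (d ^ n) := by
  induction n with
  | zero => simpa using scalesConvexityGap_one
  | succ n ih => simpa only [pow_succ] using ih.mul hd

lemma exists_convexityGap_le_of_lt (hS : Convex ℝ S) {d : ℝ} (hd : 1 / 2 < d) (hd1 : d < 1)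
    {x y : X} (hx : x ∈ S) (hy : y ∈ S) {l : ℝ} (hl : 0 < l) (hld : l < d) :
    ∃ u ∈ S, ∃ v ∈ S, ∃ m ∈ Set.Ioo (0:ℝ) 1,
      ‖u - v‖ = d * ‖x - y‖ ∧ convexityGap b u v m ≤ d ^ 2 * convexityGap b x y l := by
  have hd0 : 0 < d := by linarith
  have hPd : d • x + (1 - d) • y ∈ S := hS hx hy hd0.le (by linarith) (by ring)
  have hP1d : (1 - d) • x + d • y ∈ S := hS hx hy (by linarith) hd0.le (by ring)
  have hnorm_d : ‖d • x + (1 - d) • y - y‖ = d * ‖x - y‖ := by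
    rw [show d • x + (1 - d) • y - y = d • (x - y) by module, norm_smul,
      Real.norm_of_nonneg hd0.le]
  have hnorm_1d : ‖x - ((1 - d) • x + d • y)‖ = d * ‖x - y‖ := by
    rw [show x - ((1 - d) • x + d • y) = d • (x - y) by module, norm_smul,
      Real.norm_of_nonneg hd0.le]
  have hdecomp := convexityGap_decomposition b x y hl hld hd hd1
  set T := d ^ 2 * convexityGap b x y l
  by_cases h1 : convexityGap b (d • x + (1 - d) • y) y (l / d) ≤ T
  · exact ⟨_, hPd, y, hy, l / d, ⟨by positivity, (div_lt_one hd0).2 hld⟩, hnorm_d, h1⟩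
  by_cases h2 : convexityGap b (d • x + (1 - d) • y) y ((1 - d) / d) ≤ T
  · exact ⟨_, hPd, y, hy, (1 - d) / d,
      ⟨div_pos (by linarith) hd0, (div_lt_one hd0).2 (by linarith)⟩, hnorm_d, h2⟩
  by_cases h3 : convexityGap b x ((1 - d) • x + d • y) ((2 * d - 1) / d) ≤ T
  · exact ⟨x, hx, _, hP1d, (2 * d - 1) / d,
      ⟨div_pos (by linarith) hd0, (div_lt_one hd0).2 (by linarith)⟩, hnorm_1d, h3⟩
  -- Otherwise the convex combination `hdecomp` of three numbers exceeding `T` would equal `T`.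
  exfalso
  push Not at h1 h2 h3
  have h1l : 0 < 1 - l := by linarith
  have hw : ((d - l) / (1 - l) + (1 - d) ^ 2 / (1 - l) + d * (1 - d) / (1 - l)) * T = T := by
    rw [← add_div, ← add_div, (div_eq_one_iff_eq h1l.ne').2 (by ring), one_mul]
  linarith [mul_lt_mul_of_pos_left h1 (div_pos (by linarith : 0 < d - l) h1l),
    mul_lt_mul_of_pos_left h2 (div_pos (by nlinarith : 0 < (1 - d) ^ 2) h1l),
    mul_lt_mul_of_pos_left h3 (div_pos (by nlinarith : 0 < d * (1 - d)) h1l)]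

lemma scalesConvexityGap_of_half_lt (hS : Convex ℝ S) {d : ℝ} (hd : 1 / 2 < d) (hd1 : d < 1) :
    ScalesConvexityGap S b d := by
  rintro x hx y hy l ⟨hl0, hl1⟩
  rcases lt_or_ge l d with hld | hdl
  · exact exists_convexityGap_le_of_lt hS hd hd1 hx hy hl0 hld
  · obtain ⟨u, hu, v, hv, m, hm, huv, hgap⟩ :=
      exists_convexityGap_le_of_lt (b := b) hS hd hd1 hy hx (l := 1 - l) (by linarith)
        (by linarith)
    exact ⟨u, hu, v, hv, m, hm, by rw [huv, norm_sub_rev], by rwa [convexityGap_swap b x y l]⟩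

lemma scalesConvexityGap_of_mem_Ioo (hS : Convex ℝ S) {c : ℝ} (hc : c ∈ Set.Ioo (0:ℝ) 1) :
    ScalesConvexityGap S b c := by
  obtain ⟨n, hn⟩ := exists_pow_lt_of_lt_one hc.1 (by norm_num : (1 / 2 : ℝ) < 1)
  have hn0 : n ≠ 0 := by rintro rfl; linarith [hc.2]
  have hroot : (c ^ (n⁻¹ : ℝ)) ^ n = c := Real.rpow_inv_natCast_pow hc.1.le hn0
  have hhalf : 1 / 2 < c ^ (n⁻¹ : ℝ) := by
    by_contra! h
    linarith [pow_le_pow_left₀ (Real.rpow_nonneg hc.1.le _) h n]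
  have hlt : c ^ (n⁻¹ : ℝ) < 1 := Real.rpow_lt_one hc.1.le hc.2
    (inv_pos.2 (Nat.cast_pos.2 (Nat.pos_of_ne_zero hn0)))
  simpa only [hroot] using (scalesConvexityGap_of_half_lt hS hhalf hlt).pow n

end Scaling

section Modulus

variable {X : Type*} [NormedAddCommGroup X] [NormedSpace ℝ X] {S : Set X} {b : X → ℝ}

lemma uniformConvexityModulus_le {u v : X} (hu : u ∈ S) (hv : v ∈ S) {m : ℝ}
    (hm : m ∈ Set.Ioo (0:ℝ) 1) {t : ℝ} (huv : ‖u - v‖ = t) :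
    uniformConvexityModulus S b t ≤ ENNReal.ofReal (convexityGap b u v m) :=
  sInf_le ⟨u, hu, v, hv, m, hm, huv, rfl⟩

lemma uniformConvexityModulus_mul_le (hS : Convex ℝ S) {c : ℝ} (hc : c ∈ Set.Ioo (0:ℝ) 1)
    (t : ℝ) :
    uniformConvexityModulus S b (c * t)
      ≤ ENNReal.ofReal (c ^ 2) * uniformConvexityModulus S b t := by
  have hc2 : ENNReal.ofReal (c ^ 2) ≠ 0 := (ENNReal.ofReal_pos.2 (pow_pos hc.1 2)).ne'
  rw [mul_comm (ENNReal.ofReal _), ← ENNReal.div_le_iff hc2 ENNReal.ofReal_ne_top]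
  refine le_sInf ?_
  rintro r ⟨x, hx, y, hy, l, hl, rfl, rfl⟩
  obtain ⟨u, hu, v, hv, m, hm, huv, hgap⟩ := scalesConvexityGap_of_mem_Ioo hS hc x hx y hy l hl
  rw [ENNReal.div_le_iff hc2 ENNReal.ofReal_ne_top, ← ENNReal.ofReal_mul' (by positivity),
    mul_comm (convexityGap _ _ _ _)]
  exact (uniformConvexityModulus_le hu hv hm huv).trans (ENNReal.ofReal_le_ofReal hgap)

lemma ofReal_sq_mul_uniformConvexityModulus_le (hS : Convex ℝ S) {c : ℝ} (hc : 1 ≤ c)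
    (t : ℝ) :
    ENNReal.ofReal (c ^ 2) * uniformConvexityModulus S b t
      ≤ uniformConvexityModulus S b (c * t) := by
  rcases hc.eq_or_lt with rfl | hc1
  · simp
  have hc0 : 0 < c := by linarith
  have hinv : c⁻¹ ∈ Set.Ioo (0:ℝ) 1 := ⟨inv_pos.2 hc0, inv_lt_one_of_one_lt₀ hc1⟩
  have h := uniformConvexityModulus_mul_le (b := b) hS hinv (c * t)
  rw [inv_mul_cancel_left₀ hc0.ne'] at h
  calc ENNReal.ofReal (c ^ 2) * uniformConvexityModulus S b t
      ≤ ENNReal.ofReal (c ^ 2)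
          * (ENNReal.ofReal (c⁻¹ ^ 2) * uniformConvexityModulus S b (c * t)) := by
        gcongr
    _ = uniformConvexityModulus S b (c * t) := by
        rw [← mul_assoc, ← ENNReal.ofReal_mul (by positivity), ← mul_pow,
          mul_inv_cancel₀ hc0.ne', one_pow, ENNReal.ofReal_one, one_mul]

lemma uniformConvexityModulus_le_ofReal_sq_div_mul (hS : Convex ℝ S) {s t : ℝ} (hs : 0 < s)
    (hst : s < t) :
    uniformConvexityModulus S b s
      ≤ ENNReal.ofReal (s ^ 2) / ENNReal.ofReal (t ^ 2) * uniformConvexityModulus S b t := by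
  have ht : 0 < t := hs.trans hst
  have h := uniformConvexityModulus_mul_le (b := b) hS ⟨div_pos hs ht, (div_lt_one ht).2 hst⟩ t
  rwa [div_mul_cancel₀ _ ht.ne', div_pow, ENNReal.ofReal_div_of_pos (by positivity)] at h

lemma uniformConvexityModulus_div_sq_mono (hS : Convex ℝ S) {s t : ℝ} (hs : 0 < s)
    (hst : s ≤ t) :
    uniformConvexityModulus S b s / ENNReal.ofReal (s ^ 2)
      ≤ uniformConvexityModulus S b t / ENNReal.ofReal (t ^ 2) := by
  rcases hst.eq_or_lt with rfl | hst
  · rfl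
  have hs2 : ENNReal.ofReal (s ^ 2) ≠ 0 := (ENNReal.ofReal_pos.2 (by positivity)).ne'
  rw [ENNReal.div_le_iff hs2 ENNReal.ofReal_ne_top]
  refine (uniformConvexityModulus_le_ofReal_sq_div_mul hS hs hst).trans_eq ?_
  rw [div_eq_mul_inv, div_eq_mul_inv]
  ring

lemma uniformConvexityModulus_zero (hne : S.Nonempty) : uniformConvexityModulus S b 0 = 0 := by
  obtain ⟨x, hx⟩ := hne
  have h := uniformConvexityModulus_le (b := b) hx hx (m := 1 / 2) (by norm_num)
    (sub_self x ▸ norm_zero)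
  rwa [convexityGap_self, ENNReal.ofReal_zero, nonpos_iff_eq_zero] at h

lemma uniformConvexityModulus_mono (hS : Convex ℝ S) (hne : S.Nonempty) {s t : ℝ} (hs : 0 ≤ s)
    (hst : s ≤ t) : uniformConvexityModulus S b s ≤ uniformConvexityModulus S b t := by
  rcases hs.eq_or_lt with rfl | hs
  · simp [uniformConvexityModulus_zero hne]
  rcases hst.eq_or_lt with rfl | hst
  · rfl
  refine (uniformConvexityModulus_le_ofReal_sq_div_mul hS hs hst).trans
    (mul_le_of_le_one_left zero_le ?_)
  exact ENNReal.div_le_of_le_mul (by rw [one_mul]; exact ENNReal.ofReal_le_ofReal (by gcongr))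

end Modulus

theorem modulus_of_uniform_convexity_properties_general
    {X : Type*} [NormedAddCommGroup X] [NormedSpace ℝ X]
    (S : Set X) (hS : S.Nonempty) (hSconv : Convex ℝ S)
    (b : X → ℝ)
    (ψ : ℝ → ℝ≥0∞)
    (hψ : ∀ t : ℝ, ψ t =
      sInf { r : ℝ≥0∞ | ∃ x ∈ S, ∃ y ∈ S, ∃ l ∈ Set.Ioo (0:ℝ) 1, ‖x - y‖ = t ∧
        r = ENNReal.ofReal
          ((l * b x + (1 - l) * b y - b (l • x + (1 - l) • y)) / (l * (1 - l))) }) :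
    (∀ c : ℝ, 1 ≤ c → ∀ t : ℝ, 0 ≤ t → ENNReal.ofReal (c ^ 2) * ψ t ≤ ψ (c * t)) ∧
    (∀ c : ℝ, c ∈ Set.Ioo (0:ℝ) 1 → ∀ t : ℝ, 0 ≤ t →
      ψ (c * t) ≤ ENNReal.ofReal (c ^ 2) * ψ t) ∧
    (∀ s t : ℝ, 0 < s → s ≤ t →
      ψ s / ENNReal.ofReal (s ^ 2) ≤ ψ t / ENNReal.ofReal (t ^ 2)) ∧
    (∀ s t : ℝ, 0 ≤ s → s ≤ t → ψ s ≤ ψ t) := by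
  obtain rfl : ψ = uniformConvexityModulus S b := funext hψ
  exact ⟨fun c hc t _ => ofReal_sq_mul_uniformConvexityModulus_le hSconv hc t,
    fun c hc t _ => uniformConvexityModulus_mul_le hSconv hc t,
    fun s t hs hst => uniformConvexityModulus_div_sq_mono hSconv hs hst,
    fun s t hs hst => uniformConvexityModulus_mono hSconv hS hs hst⟩

/-- Properties of the modulus of uniform convexity `ψ` of a convex
function `b` on a nonempty convex set `S`:
(a) `ψ(ct) ≥ c² ψ(t)` for `c ≥ 1`, `t ≥ 0`;
(b) `ψ(ct) ≤ c² ψ(t)` for `c ∈ (0,1)`, `t ≥ 0`;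
(c) `t ↦ ψ(t)/t²` is nondecreasing on `(0,∞)`;
(d) `ψ` is nondecreasing on `[0,∞)`. -/
theorem modulus_of_uniform_convexity_properties
    {X : Type*} [NormedAddCommGroup X] [NormedSpace ℝ X]
    (S : Set X) (hS : S.Nonempty) (hSconv : Convex ℝ S)
    (b : X → ℝ) (hb : ConvexOn ℝ S b)
    (ψ : ℝ → ℝ≥0∞)
    (hψ : ∀ t : ℝ, ψ t =
      sInf { r : ℝ≥0∞ | ∃ x ∈ S, ∃ y ∈ S, ∃ l ∈ Set.Ioo (0:ℝ) 1, ‖x - y‖ = t ∧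
        r = ENNReal.ofReal
          ((l * b x + (1 - l) * b y - b (l • x + (1 - l) • y)) / (l * (1 - l))) }) :
    (∀ c : ℝ, 1 ≤ c → ∀ t : ℝ, 0 ≤ t → ENNReal.ofReal (c ^ 2) * ψ t ≤ ψ (c * t)) ∧
    (∀ c : ℝ, c ∈ Set.Ioo (0:ℝ) 1 → ∀ t : ℝ, 0 ≤ t →
      ψ (c * t) ≤ ENNReal.ofReal (c ^ 2) * ψ t) ∧
    (∀ s t : ℝ, 0 < s → s ≤ t →
      ψ s / ENNReal.ofReal (s ^ 2) ≤ ψ t / ENNReal.ofReal (t ^ 2)) ∧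
    (∀ s t : ℝ, 0 ≤ s → s ≤ t → ψ s ≤ ψ t) :=
  modulus_of_uniform_convexity_properties_general S hS hSconv b ψ hψ
end

section
/- Under the Bregman setup, let x ∈ C, y ∈ U and s ∈ ℝ. If b(λx + (1−λ)y) + λ(1−λ)s ≤ λ b(x) + (1−λ) b(y) for every λ ∈ (0,1), then s ≤ B(x,y) = b(x) − b(y) − ⟨b'(y), x − y⟩. Consequently, if ψ is a relative gauge of b on (S₁, S₂ ∩ U) for nonempty S₁ ⊆ C and S₂ ⊆ C with S₂ ∩ U ≠ ∅, then ψ(‖x − y‖) ≤ B(x,y) for every x ∈ S₁ and y ∈ S₂ ∩ U. -/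
open Filter Topology

/-- Under the Bregman setup (`C` nonempty convex with nonempty interior
`U`, `b` convex on `C`, Gâteaux differentiable on `U` with derivative `b'`,
`B x y = b x - b y - ⟨b' y, x - y⟩`): if `b(λx+(1-λ)y) + λ(1-λ)s ≤ λ b(x) + (1-λ) b(y)`
for every `λ ∈ (0,1)`, then `s ≤ B(x,y)`. Consequently, if `ψ` is a relative gauge of `b`
on `(S₁, S₂ ∩ U)`, then `ψ(‖x-y‖) ≤ B(x,y)` for all `x ∈ S₁`, `y ∈ S₂ ∩ U`. -/
theorem relative_gauge_le_bregman_divergence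
    {X : Type*} [NormedAddCommGroup X] [NormedSpace ℝ X]
    (C : Set X) (hC : C.Nonempty) (hCconv : Convex ℝ C)
    (hU : (interior C).Nonempty)
    (b : X → ℝ) (hbconv : ConvexOn ℝ C b)
    (b' : X → X →L[ℝ] ℝ)
    (hb' : ∀ y ∈ interior C, ∀ v : X,
      Tendsto (fun t : ℝ => (b (y + t • v) - b y) / t) (𝓝[≠] (0:ℝ)) (𝓝 (b' y v))) :
    (∀ x ∈ C, ∀ y ∈ interior C, ∀ s : ℝ,
      (∀ l ∈ Set.Ioo (0:ℝ) 1,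
        b (l • x + (1 - l) • y) + l * (1 - l) * s ≤ l * b x + (1 - l) * b y) →
      s ≤ b x - b y - b' y (x - y)) ∧
    (∀ S₁ S₂ : Set X, S₁ ⊆ C → S₂ ⊆ C → S₁.Nonempty → (S₂ ∩ interior C).Nonempty →
      ∀ ψ : ℝ → ℝ, (∀ t : ℝ, 0 < t → 0 < ψ t) →
      (∀ x ∈ S₁, ∀ y ∈ S₂ ∩ interior C, ∀ l ∈ Set.Ioo (0:ℝ) 1,
        b (l • x + (1 - l) • y) + l * (1 - l) * ψ ‖x - y‖ ≤ l * b x + (1 - l) * b y) →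
      ∀ x ∈ S₁, ∀ y ∈ S₂ ∩ interior C, ψ ‖x - y‖ ≤ b x - b y - b' y (x - y)) := by
  have main : ∀ x ∈ C, ∀ y ∈ interior C, ∀ s : ℝ,
      (∀ l ∈ Set.Ioo (0:ℝ) 1,
        b (l • x + (1 - l) • y) + l * (1 - l) * s ≤ l * b x + (1 - l) * b y) →
      s ≤ b x - b y - b' y (x - y) := by
    intro x hx y hy s hs
    have hv : Tendsto (fun t : ℝ => (b (y + t • (x - y)) - b y) / t) (𝓝[>] (0:ℝ))
        (𝓝 (b' y (x - y))) :=
      (hb' y hy (x - y)).mono_left (nhdsWithin_mono _ (fun t ht => ne_of_gt ht))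
    have hg : Tendsto (fun t : ℝ => b x - b y - (1 - t) * s) (𝓝[>] (0:ℝ))
        (𝓝 (b x - b y - s)) := by
      have h0 : Tendsto (fun t : ℝ => b x - b y - (1 - t) * s) (𝓝 (0:ℝ))
          (𝓝 (b x - b y - (1 - 0) * s)) := (tendsto_const_nhds.sub (((tendsto_const_nhds.sub tendsto_id).mul tendsto_const_nhds)))
      simpa using h0.mono_left nhdsWithin_le_nhds
    have hev : ∀ᶠ t in 𝓝[>] (0:ℝ),
        (b (y + t • (x - y)) - b y) / t ≤ b x - b y - (1 - t) * s := by
      filter_upwards [Ioo_mem_nhdsGT_of_mem (by norm_num : (0:ℝ) ∈ Set.Ico 0 1)]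
        with t ht
      have h := hs t ht
      have heq : y + t • (x - y) = t • x + (1 - t) • y := by
        rw [smul_sub, sub_smul, one_smul]; abel
      rw [heq]
      rw [div_le_iff₀ ht.1]
      nlinarith [ht.1, ht.2]
    have := le_of_tendsto_of_tendsto hv hg hev
    linarith
  refine ⟨main, ?_⟩
  intro S₁ S₂ hS₁ hS₂ _ _ ψ hψ hgauge x hx y hy
  exact main x (hS₁ hx) y hy.2 (ψ ‖x - y‖) (hgauge x hx y hy)
end

section
/- Under the Bregman setup, let S ⊆ C be a nonempty convex set with S ∩ U ≠ ∅, and assume b is uniformly convex on S, i.e., there exists a gauge ψ : [0,∞) → [0,∞) with ψ(t) > 0 for all t > 0 such that b(λx + (1−λ)y) + λ(1−λ)ψ(‖x−y‖) ≤ λ b(x) + (1−λ) b(y) for all x, y ∈ S and λ ∈ (0,1). If (x_i) is a sequence in S and (y_i) is a sequence in S ∩ U with lim_{i→∞} B(x_i, y_i) = 0, then lim_{i→∞} ‖x_i − y_i‖ = 0. -/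
open Filter Topology

/-- Under the Bregman setup, if `b` is uniformly convex on a nonempty
convex set `S ⊆ C` with `S ∩ U ≠ ∅` (with gauge `ψ`), `(x_i)` is a sequence in `S`,
`(y_i)` a sequence in `S ∩ U`, and `B(x_i, y_i) → 0`, then `‖x_i − y_i‖ → 0`. -/
theorem uniformly_convex_bregman_tendsto_zero
    {X : Type*} [NormedAddCommGroup X] [NormedSpace ℝ X]
    (C : Set X) (hC : C.Nonempty) (hCconv : Convex ℝ C)
    (hU : (interior C).Nonempty)
    (b : X → ℝ) (hbconv : ConvexOn ℝ C b)
    (b' : X → X →L[ℝ] ℝ)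
    (hb' : ∀ y ∈ interior C, ∀ v : X,
      Tendsto (fun t : ℝ => (b (y + t • v) - b y) / t) (𝓝[≠] (0:ℝ)) (𝓝 (b' y v)))
    (S : Set X) (hSC : S ⊆ C) (hSne : S.Nonempty) (hSconv : Convex ℝ S)
    (hSU : (S ∩ interior C).Nonempty)
    (ψ : ℝ → ℝ) (hψpos : ∀ t : ℝ, 0 < t → 0 < ψ t)
    (huc : ∀ x ∈ S, ∀ y ∈ S, ∀ l ∈ Set.Ioo (0:ℝ) 1,
      b (l • x + (1 - l) • y) + l * (1 - l) * ψ ‖x - y‖ ≤ l * b x + (1 - l) * b y)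
    (x y : ℕ → X) (hx : ∀ i, x i ∈ S) (hy : ∀ i, y i ∈ S ∩ interior C)
    (hB : Tendsto (fun i => b (x i) - b (y i) - b' (y i) (x i - y i)) atTop (𝓝 0)) :
    Tendsto (fun i => ‖x i - y i‖) atTop (𝓝 0) := by
  -- Key lemma: ⟨b'(y), x − y⟩ ≤ b x − b y − ψ ‖x − y‖ for x ∈ S, y ∈ S ∩ U.
  have key : ∀ x' ∈ S, ∀ y' ∈ S ∩ interior C,
      b' y' (x' - y') ≤ b x' - b y' - ψ ‖x' - y'‖ := by
    intro x' hx' y' hy'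
    set c := b x' - b y' with hc
    set d := ‖x' - y'‖ with hd
    have h1 : Tendsto (fun l : ℝ => (b (y' + l • (x' - y')) - b y') / l)
        (𝓝[>] (0:ℝ)) (𝓝 (b' y' (x' - y'))) :=
      (hb' y' hy'.2 (x' - y')).mono_left
        (nhdsWithin_mono 0 (fun t ht => ne_of_gt ht))
    have h2 : Tendsto (fun l : ℝ => c - (1 - l) * ψ d) (𝓝[>] (0:ℝ)) (𝓝 (c - ψ d)) := by
      have hcont : Tendsto (fun l : ℝ => c - (1 - l) * ψ d) (𝓝 (0:ℝ))
          (𝓝 (c - (1 - 0) * ψ d)) := by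
        apply Continuous.tendsto
        fun_prop
      simpa using hcont.mono_left nhdsWithin_le_nhds
    have hle : ∀ᶠ l in (𝓝[>] (0:ℝ)),
        (b (y' + l • (x' - y')) - b y') / l ≤ c - (1 - l) * ψ d := by
      filter_upwards [Ioo_mem_nhdsGT_of_mem (by simp : (0:ℝ) ∈ Set.Ico (0:ℝ) 1)]
        with l hl
      obtain ⟨hl0, hl1⟩ := hl
      have hpt : l • x' + (1 - l) • y' = y' + l • (x' - y') := by module
      have h := huc x' hx' y' hy'.1 l ⟨hl0, hl1⟩
      rw [hpt] at h
      rw [div_le_iff₀ hl0]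
      nlinarith [h]
    exact le_of_tendsto_of_tendsto h1 h2 hle
  -- Nonnegativity of the Bregman divergence on S × (S ∩ U).
  have Bnonneg : ∀ x' ∈ S, ∀ y' ∈ S ∩ interior C,
      0 ≤ b x' - b y' - b' y' (x' - y') := by
    intro x' hx' y' hy'
    rcases eq_or_ne x' y' with rfl | hne
    · simp
    · have hψ := hψpos ‖x' - y'‖ (norm_pos_iff.mpr (sub_ne_zero.mpr hne))
      have := key x' hx' y' hy'
      linarith
  -- If ‖x − y‖ ≥ ε then B(x, y) ≥ ψ(ε/2).
  have main : ∀ ε : ℝ, 0 < ε → ∀ x' ∈ S, ∀ y' ∈ S ∩ interior C,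
      ε ≤ ‖x' - y'‖ → ψ (ε / 2) ≤ b x' - b y' - b' y' (x' - y') := by
    intro ε hε x' hx' y' hy' hdε
    have hd0 : (0:ℝ) < ‖x' - y'‖ := lt_of_lt_of_le hε hdε
    set θ : ℝ := (ε / 2) / ‖x' - y'‖ with hθ
    have hθ0 : 0 < θ := by positivity
    have hθ1 : θ ≤ 1 := by
      rw [hθ, div_le_one hd0]
      linarith
    set z : X := y' + θ • (x' - y') with hzdef
    have hzcomb : z = θ • x' + (1 - θ) • y' := by rw [hzdef]; module
    have hzS : z ∈ S := by
      rw [hzcomb]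
      exact hSconv hx' hy'.1 hθ0.le (by linarith) (by ring)
    have hznorm : ‖z - y'‖ = ε / 2 := by
      have : z - y' = θ • (x' - y') := by rw [hzdef]; abel
      rw [this, norm_smul, Real.norm_of_nonneg hθ0.le, hθ,
        div_mul_cancel₀ _ (ne_of_gt hd0)]
    have hkey := key z hzS y' hy'
    rw [hznorm] at hkey
    have hmap : b' y' (z - y') = θ * b' y' (x' - y') := by
      have : z - y' = θ • (x' - y') := by rw [hzdef]; abel
      rw [this, map_smul]
      rfl
    have hbz : b z ≤ θ * b x' + (1 - θ) * b y' := by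
      rw [hzcomb]
      exact hbconv.2 (hSC hx') (hSC hy'.1) hθ0.le (by linarith) (by ring)
    have hBnn := Bnonneg x' hx' y' hy'
    nlinarith [hkey, hmap, hbz]
  -- Conclusion.
  rw [NormedAddCommGroup.tendsto_nhds_zero]
  intro ε hε
  have hψε : 0 < ψ (ε / 2) := hψpos _ (by positivity)
  have hev : ∀ᶠ i in atTop,
      b (x i) - b (y i) - b' (y i) (x i - y i) < ψ (ε / 2) :=
    hB.eventually (Iio_mem_nhds hψε)
  filter_upwards [hev] with i hi
  rw [Real.norm_of_nonneg (norm_nonneg _)]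
  by_contra hcon
  push_neg at hcon
  exact absurd (main ε hε (x i) (hx i) (y i) (hy i) hcon) (by linarith)
end

section
/- Under the Bregman setup, suppose that for every nonempty, bounded and convex subset S of C the function b is uniformly convex on S (i.e., there exists ψ : [0,∞) → [0,∞) with ψ(t) > 0 for t > 0 and b(λx + (1−λ)y) + λ(1−λ)ψ(‖x−y‖) ≤ λ b(x) + (1−λ) b(y) for all x, y ∈ S, λ ∈ (0,1)). Let (x_i) be a sequence in C and (y_i) a sequence in U with lim_{i→∞} B(x_i, y_i) = 0. If one of the two sequences is norm-bounded, then the other sequence is norm-bounded as well, and moreover lim_{i→∞} ‖x_i − y_i‖ = 0. -/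
/-!
The Bregman divergence `B(x, y)` dominates the convexity gap `t b(x) + (1 - t) b(y) - b(z_t)` at
every point `z_t = t x + (1 - t) y` of the segment (gradient inequality for the convex function
`t ↦ b(z_t)`). If `M` bounds one of the two sequences, uniform convexity of `b` on the bounded
convex set `C ∩ closedBall 0 (M + 1)` makes this gap at least `ψ r / 4` as soon as the segment
contains two points of that set at distance `r ≤ 1`, and such points exist next to the bounded
endpoint whenever `r ≤ ‖x - y‖`. Hence `B(x_i, y_i) → 0` forces `‖x_i - y_i‖ → 0`, which in turn
transfers boundedness from one sequence to the other.
-/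

open Filter Topology Set Metric Bornology

lemma isBounded_range_of_tendsto_norm_sub {X : Type*} [SeminormedAddCommGroup X] {x y : ℕ → X}
    (hxy : Tendsto (fun i => ‖x i - y i‖) atTop (𝓝 0)) (hx : IsBounded (range x)) :
    IsBounded (range y) := by
  have hd : IsBounded (range (x - y)) := isBounded_range_of_tendsto _
    ((tendsto_iff_norm_sub_tendsto_zero (b := 0)).2 (by simpa using hxy))
  refine (hx.sub hd).subset (range_subset_iff.2 fun i => ?_)
  simpa using sub_mem_sub (mem_range_self (f := x) i) (mem_range_self (f := x - y) i)

section Bregman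

variable {X : Type*} [NormedAddCommGroup X] [NormedSpace ℝ X]
  {C S : Set X} {b : X → ℝ} {b' : X → X →L[ℝ] ℝ} {ψ : ℝ → ℝ} {x y : X}

def bregmanDiv (b : X → ℝ) (b' : X → X →L[ℝ] ℝ) (x y : X) : ℝ :=
  b x - b y - b' y (x - y)

lemma uniformConvexOn_of_forall_mem_Ioo (hS : Convex ℝ S)
    (h : ∀ x ∈ S, ∀ y ∈ S, ∀ l ∈ Ioo (0:ℝ) 1,
      b (l • x + (1 - l) • y) + l * (1 - l) * ψ ‖x - y‖ ≤ l * b x + (1 - l) * b y) :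
    UniformConvexOn S ψ b := by
  refine ⟨hS, fun x hx y hy l m hl hm hlm => ?_⟩
  obtain rfl : m = 1 - l := by linarith
  rcases hl.eq_or_lt with rfl | hl
  · simp
  rcases hm.eq_or_lt with hm | hm
  · obtain rfl : l = 1 := by linarith
    simp
  simp only [smul_eq_mul]
  linarith [h x hx y hy l ⟨hl, by linarith⟩]

lemma ConvexOn.lineDeriv_le_slope {d t : ℝ} (hb : ConvexOn ℝ C b) (hx : x ∈ C) (hy : y ∈ C)
    (hd : HasLineDerivAt ℝ b d y (x - y)) (ht₀ : 0 < t) (ht₁ : t ≤ 1) :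
    d ≤ (b (y + t • (x - y)) - b y) / t := by
  have hφ : ConvexOn ℝ (Icc 0 1) fun s : ℝ => b (y + s • (x - y)) := by
    have hline : (fun s : ℝ => b (y + s • (x - y))) = b ∘ AffineMap.lineMap y x := by
      ext s
      simp [AffineMap.lineMap_apply_module', add_comm]
    rw [hline]
    exact (hb.comp_affineMap _).subset (fun s hs => hb.1.lineMap_mem hy hx hs) (convex_Icc 0 1)
  simpa [slope_def_field] using
    hφ.le_slope_of_hasDerivAt (left_mem_Icc.2 zero_le_one) ⟨ht₀.le, ht₁⟩ ht₀ hd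

lemma ConvexOn.secant_sub_le_bregmanDiv {t : ℝ} (hb : ConvexOn ℝ C b) (hx : x ∈ C) (hy : y ∈ C)
    (hd : HasLineDerivAt ℝ b (b' y (x - y)) y (x - y)) (ht₀ : 0 < t) (ht₁ : t ≤ 1) :
    t * b x + (1 - t) * b y - b (t • x + (1 - t) • y) ≤ bregmanDiv b b' x y := by
  have hslope := hb.lineDeriv_le_slope hx hy hd ht₀ ht₁
  rw [show y + t • (x - y) = t • x + (1 - t) • y by module, le_div_iff₀ ht₀] at hslope
  have hsecant := hb.2 hx hy ht₀.le (sub_nonneg.2 ht₁) (add_sub_cancel t 1)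
  simp only [smul_eq_mul] at hsecant
  unfold bregmanDiv
  nlinarith [mul_nonneg (sub_nonneg.2 ht₁) (sub_nonneg.2 hsecant)]

lemma UniformConvexOn.le_bregmanDiv {α β : ℝ} (hψ : UniformConvexOn S ψ b)
    (hb : ConvexOn ℝ C b) (hx : x ∈ C) (hy : y ∈ C)
    (hd : HasLineDerivAt ℝ b (b' y (x - y)) y (x - y)) (hβ : 0 ≤ β) (hβα : β < α) (hα : α ≤ 1)
    (hpα : α • x + (1 - α) • y ∈ S) (hpβ : β • x + (1 - β) • y ∈ S) :
    ψ ((α - β) * ‖x - y‖) / 4 ≤ bregmanDiv b b' x y := by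
  have hdist : ‖(α • x + (1 - α) • y) - (β • x + (1 - β) • y)‖ = (α - β) * ‖x - y‖ := by
    rw [show (α • x + (1 - α) • y) - (β • x + (1 - β) • y) = (α - β) • (x - y) by module,
      norm_smul, Real.norm_of_nonneg (by linarith)]
  have hmid : (1 / 2 : ℝ) • (α • x + (1 - α) • y) + (1 / 2 : ℝ) • (β • x + (1 - β) • y) =
      ((α + β) / 2) • x + (1 - (α + β) / 2) • y := by module
  have hmidpoint := hψ.2 hpα hpβ (one_half_pos (α := ℝ)).le one_half_pos.le
    (add_halves 1)
  rw [hmid, hdist] at hmidpoint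
  have hpα' := hb.2 hx hy (by linarith) (by linarith) (add_sub_cancel α 1)
  have hpβ' := hb.2 hx hy hβ (by linarith) (add_sub_cancel β 1)
  simp only [smul_eq_mul] at hmidpoint hpα' hpβ'
  have hgap := hb.secant_sub_le_bregmanDiv hx hy hd (t := (α + β) / 2) (by linarith) (by linarith)
  linarith

lemma UniformConvexOn.div_four_le_bregmanDiv {M R r : ℝ}
    (hψ : UniformConvexOn (C ∩ closedBall 0 R) ψ b) (hb : ConvexOn ℝ C b) (hx : x ∈ C)
    (hy : y ∈ C) (hd : HasLineDerivAt ℝ b (b' y (x - y)) y (x - y)) (hr : 0 < r)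
    (hrR : M + r ≤ R) (hxy : r ≤ ‖x - y‖) (hM : ‖x‖ ≤ M ∨ ‖y‖ ≤ M) :
    ψ r / 4 ≤ bregmanDiv b b' x y := by
  have hxy₀ : 0 < ‖x - y‖ := hr.trans_le hxy
  set s := r / ‖x - y‖
  have hs₀ : 0 < s := div_pos hr hxy₀
  have hs₁ : s ≤ 1 := (div_le_one hxy₀).2 hxy
  have hsr : s * ‖x - y‖ = r := div_mul_cancel₀ r hxy₀.ne'
  have hseg : ∀ t : ℝ, 0 ≤ t → t ≤ 1 → t • x + (1 - t) • y ∈ C := fun t ht₀ ht₁ =>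
    hb.1 hx hy ht₀ (sub_nonneg.2 ht₁) (add_sub_cancel t 1)
  rcases hM with hxM | hyM
  · have hx' : (1 : ℝ) • x + (1 - 1 : ℝ) • y = x := by module
    have hz : ‖(1 - s) • x + (1 - (1 - s)) • y‖ ≤ R :=
      calc ‖(1 - s) • x + (1 - (1 - s)) • y‖ = ‖x - s • (x - y)‖ := by congr 1; module
        _ ≤ ‖x‖ + s * ‖x - y‖ := by grw [norm_sub_le, norm_smul, Real.norm_of_nonneg hs₀.le]
        _ ≤ R := by linarith
    have := hψ.le_bregmanDiv hb hx hy hd (by linarith) (by linarith) le_rfl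
      (by rw [hx']; exact ⟨hx, mem_closedBall_zero_iff.2 (by linarith)⟩)
      ⟨hseg _ (by linarith) (by linarith), mem_closedBall_zero_iff.2 hz⟩
    rwa [sub_sub_cancel, hsr] at this
  · have hy' : (0 : ℝ) • x + (1 - 0 : ℝ) • y = y := by module
    have hz : ‖s • x + (1 - s) • y‖ ≤ R :=
      calc ‖s • x + (1 - s) • y‖ = ‖y + s • (x - y)‖ := by congr 1; module
        _ ≤ ‖y‖ + s * ‖x - y‖ := by grw [norm_add_le, norm_smul, Real.norm_of_nonneg hs₀.le]
        _ ≤ R := by linarith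
    have := hψ.le_bregmanDiv hb hx hy hd le_rfl hs₀ hs₁
      ⟨hseg _ hs₀.le hs₁, mem_closedBall_zero_iff.2 hz⟩
      (by rw [hy']; exact ⟨hy, mem_closedBall_zero_iff.2 (by linarith)⟩)
    rwa [sub_zero, hsr] at this

lemma UniformConvexOn.tendsto_norm_sub_of_tendsto_bregmanDiv {M : ℝ} {x y : ℕ → X}
    (hψ : UniformConvexOn (C ∩ closedBall 0 (M + 1)) ψ b) (hψpos : ∀ t, 0 < t → 0 < ψ t)
    (hb : ConvexOn ℝ C b) (hx : ∀ i, x i ∈ C) (hy : ∀ i, y i ∈ C)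
    (hd : ∀ i, HasLineDerivAt ℝ b (b' (y i) (x i - y i)) (y i) (x i - y i))
    (hM : (∀ i, ‖x i‖ ≤ M) ∨ ∀ i, ‖y i‖ ≤ M)
    (hB : Tendsto (fun i => bregmanDiv b b' (x i) (y i)) atTop (𝓝 0)) :
    Tendsto (fun i => ‖x i - y i‖) atTop (𝓝 0) := by
  refine tendsto_order.2 ⟨fun a ha => .of_forall fun i => ha.trans_le (norm_nonneg _),
    fun ε hε => ?_⟩
  have hr : 0 < min ε 1 := lt_min hε one_pos
  filter_upwards [hB.eventually_lt_const (div_pos (hψpos _ hr) four_pos)] with i hi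
  by_contra! hεi
  exact hi.not_ge <| hψ.div_four_le_bregmanDiv hb (hx i) (hy i) (hd i) hr
    (by gcongr; exact min_le_right _ _) ((min_le_left _ _).trans hεi) (hM.imp (· i) (· i))

end Bregman

theorem bounded_uniformly_convex_bregman_sequential_consistency_general
    {X : Type*} [NormedAddCommGroup X] [NormedSpace ℝ X]
    (C : Set X) (hCconv : Convex ℝ C)
    (b : X → ℝ) (hbconv : ConvexOn ℝ C b)
    (b' : X → X →L[ℝ] ℝ)
    (hb' : ∀ y ∈ interior C, ∀ v : X,
      Tendsto (fun t : ℝ => (b (y + t • v) - b y) / t) (𝓝[≠] (0:ℝ)) (𝓝 (b' y v)))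
    (huc : ∀ S : Set X, S ⊆ C → S.Nonempty → Bornology.IsBounded S → Convex ℝ S →
      ∃ ψ : ℝ → ℝ, (∀ t : ℝ, 0 < t → 0 < ψ t) ∧
        ∀ x ∈ S, ∀ y ∈ S, ∀ l ∈ Set.Ioo (0:ℝ) 1,
          b (l • x + (1 - l) • y) + l * (1 - l) * ψ ‖x - y‖ ≤ l * b x + (1 - l) * b y)
    (x y : ℕ → X) (hx : ∀ i, x i ∈ C) (hy : ∀ i, y i ∈ interior C)
    (hB : Tendsto (fun i => b (x i) - b (y i) - b' (y i) (x i - y i)) atTop (𝓝 0))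
    (hbdd : Bornology.IsBounded (Set.range x) ∨ Bornology.IsBounded (Set.range y)) :
    Bornology.IsBounded (Set.range x) ∧ Bornology.IsBounded (Set.range y) ∧
      Tendsto (fun i => ‖x i - y i‖) atTop (𝓝 0) := by
  have hd : ∀ i, HasLineDerivAt ℝ b (b' (y i) (x i - y i)) (y i) (x i - y i) := fun i =>
    hasLineDerivAt_iff_tendsto_slope_zero.2 <| by
      simpa only [smul_eq_mul, inv_mul_eq_div] using hb' _ (hy i) _
  obtain ⟨M, hM⟩ : ∃ M, (∀ i, ‖x i‖ ≤ M) ∨ ∀ i, ‖y i‖ ≤ M := by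
    rcases hbdd with h | h <;> obtain ⟨M, hM⟩ := isBounded_iff_forall_norm_le.1 h
    exacts [⟨M, .inl fun i => hM _ (mem_range_self i)⟩,
      ⟨M, .inr fun i => hM _ (mem_range_self i)⟩]
  have hS : (C ∩ closedBall 0 (M + 1)).Nonempty := by
    rcases hM with hM | hM
    exacts [⟨x 0, hx 0, mem_closedBall_zero_iff.2 (by linarith [hM 0])⟩,
      ⟨y 0, interior_subset (hy 0), mem_closedBall_zero_iff.2 (by linarith [hM 0])⟩]
  have hSconv := hCconv.inter (convex_closedBall 0 (M + 1))
  obtain ⟨ψ, hψpos, hψ⟩ := huc _ inter_subset_left hS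
    (isBounded_closedBall.subset inter_subset_right) hSconv
  have hUC := uniformConvexOn_of_forall_mem_Ioo hSconv hψ
  have hdist := hUC.tendsto_norm_sub_of_tendsto_bregmanDiv hψpos hbconv hx
    (fun i => interior_subset (hy i)) hd hM hB
  rcases hbdd with hbx | hby
  · exact ⟨hbx, isBounded_range_of_tendsto_norm_sub hdist hbx, hdist⟩
  · exact ⟨isBounded_range_of_tendsto_norm_sub (by simpa only [norm_sub_rev] using hdist) hby,
      hby, hdist⟩

/-- Under the Bregman setup, if `b` is uniformly convex on every
nonempty, bounded and convex subset of `C`, `(x_i)` is a sequence in `C`, `(y_i)` a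
sequence in `U`, `B(x_i, y_i) → 0`, and one of the two sequences is norm-bounded, then
both are norm-bounded and `‖x_i − y_i‖ → 0`. -/
theorem bounded_uniformly_convex_bregman_sequential_consistency
    {X : Type*} [NormedAddCommGroup X] [NormedSpace ℝ X]
    (C : Set X) (hC : C.Nonempty) (hCconv : Convex ℝ C)
    (hU : (interior C).Nonempty)
    (b : X → ℝ) (hbconv : ConvexOn ℝ C b)
    (b' : X → X →L[ℝ] ℝ)
    (hb' : ∀ y ∈ interior C, ∀ v : X,
      Tendsto (fun t : ℝ => (b (y + t • v) - b y) / t) (𝓝[≠] (0:ℝ)) (𝓝 (b' y v)))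
    (huc : ∀ S : Set X, S ⊆ C → S.Nonempty → Bornology.IsBounded S → Convex ℝ S →
      ∃ ψ : ℝ → ℝ, (∀ t : ℝ, 0 < t → 0 < ψ t) ∧
        ∀ x ∈ S, ∀ y ∈ S, ∀ l ∈ Set.Ioo (0:ℝ) 1,
          b (l • x + (1 - l) • y) + l * (1 - l) * ψ ‖x - y‖ ≤ l * b x + (1 - l) * b y)
    (x y : ℕ → X) (hx : ∀ i, x i ∈ C) (hy : ∀ i, y i ∈ interior C)
    (hB : Tendsto (fun i => b (x i) - b (y i) - b' (y i) (x i - y i)) atTop (𝓝 0))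
    (hbdd : Bornology.IsBounded (Set.range x) ∨ Bornology.IsBounded (Set.range y)) :
    Bornology.IsBounded (Set.range x) ∧ Bornology.IsBounded (Set.range y) ∧
      Tendsto (fun i => ‖x i - y i‖) atTop (𝓝 0) :=
  bounded_uniformly_convex_bregman_sequential_consistency_general C hCconv b hbconv b' hb' huc x y
    hx hy hB hbdd
end

section
/- Under the Bregman setup, suppose additionally that b is continuous on C and that b' is bounded on every bounded convex subset of U, i.e., for each bounded convex W ⊆ U there exists M > 0 with ‖b'(z)‖_{X*} ≤ M for every z ∈ W. Let (x_i) be a sequence in C and (y_i) a sequence in U such that at least one of the two sequences is norm-bounded. If lim_{i→∞} ‖x_i − y_i‖ = 0, then lim_{i→∞} B(x_i, y_i) = 0. -/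
open Filter Topology

/-- Under the Bregman setup, assume `b` is continuous on `C` and `b'`
is bounded on every bounded convex subset of `U`. If `(x_i)` is a sequence in `C`,
`(y_i)` a sequence in `U`, one of them is norm-bounded, and `‖x_i − y_i‖ → 0`, then
`B(x_i, y_i) → 0`. -/
theorem bregman_tendsto_zero_of_dist_tendsto_zero
    {X : Type*} [NormedAddCommGroup X] [NormedSpace ℝ X]
    (C : Set X) (hC : C.Nonempty) (hCconv : Convex ℝ C)
    (hU : (interior C).Nonempty)
    (b : X → ℝ) (hbconv : ConvexOn ℝ C b)
    (b' : X → X →L[ℝ] ℝ)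
    (hb' : ∀ y ∈ interior C, ∀ v : X,
      Tendsto (fun t : ℝ => (b (y + t • v) - b y) / t) (𝓝[≠] (0:ℝ)) (𝓝 (b' y v)))
    (hbcont : ContinuousOn b C)
    (hb'bdd : ∀ W : Set X, W ⊆ interior C → Bornology.IsBounded W → Convex ℝ W →
      ∃ M : ℝ, 0 < M ∧ ∀ z ∈ W, ‖b' z‖ ≤ M)
    (x y : ℕ → X) (hx : ∀ i, x i ∈ C) (hy : ∀ i, y i ∈ interior C)
    (hbdd : Bornology.IsBounded (Set.range x) ∨ Bornology.IsBounded (Set.range y))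
    (hdist : Tendsto (fun i => ‖x i - y i‖) atTop (𝓝 0)) :
    Tendsto (fun i => b (x i) - b (y i) - b' (y i) (x i - y i)) atTop (𝓝 0) := by
  -- Both sequences are bounded.
  obtain ⟨D, hD⟩ : ∃ D : ℝ, ∀ i, ‖x i - y i‖ ≤ D := by
    obtain ⟨D, hD⟩ := hdist.bddAbove_range
    exact ⟨D, fun i => hD ⟨i, rfl⟩⟩
  have hbdd2 : Bornology.IsBounded (Set.range x ∪ Set.range y) := by
    rcases hbdd with h | h
    · obtain ⟨R, hR⟩ := isBounded_iff_forall_norm_le.mp h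
      refine isBounded_iff_forall_norm_le.mpr ⟨R + D, ?_⟩
      rintro z (⟨i, rfl⟩ | ⟨i, rfl⟩)
      · have := norm_nonneg (x i - y i); linarith [hR (x i) ⟨i, rfl⟩, hD i]
      · have h1 : ‖x i - (x i - y i)‖ ≤ ‖x i‖ + ‖x i - y i‖ := norm_sub_le _ _
        rw [sub_sub_cancel] at h1
        linarith [hR (x i) ⟨i, rfl⟩, hD i]
    · obtain ⟨R, hR⟩ := isBounded_iff_forall_norm_le.mp h
      refine isBounded_iff_forall_norm_le.mpr ⟨R + D, ?_⟩
      rintro z (⟨i, rfl⟩ | ⟨i, rfl⟩)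
      · have h1 : ‖y i + (x i - y i)‖ ≤ ‖y i‖ + ‖x i - y i‖ := norm_add_le _ _
        rw [add_sub_cancel] at h1
        linarith [hR (y i) ⟨i, rfl⟩, hD i]
      · have := norm_nonneg (x i - y i); linarith [hR (y i) ⟨i, rfl⟩, hD i]
  set S : Set X := convexHull ℝ (Set.range x ∪ Set.range y) with hS
  set W : Set X := S ∩ interior C with hWdef
  have hWsub : W ⊆ interior C := Set.inter_subset_right
  have hWconv : Convex ℝ W := (convex_convexHull ℝ _).inter hCconv.interior
  have hWbdd : Bornology.IsBounded W :=
    (isBounded_convexHull.mpr hbdd2).subset Set.inter_subset_left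
  obtain ⟨M, hM0, hMle⟩ := hb'bdd W hWsub hWbdd hWconv
  have hyW : ∀ i, y i ∈ W :=
    fun i => ⟨subset_convexHull ℝ _ (Or.inr ⟨i, rfl⟩), hy i⟩
  -- b is M-Lipschitz on W.
  have key : ∀ p ∈ W, ∀ q ∈ W, |b p - b q| ≤ M * ‖p - q‖ := by
    intro p hp q hq
    set f : ℝ → ℝ := fun t => b (q + t • (p - q)) with hf
    have hmem : ∀ t ∈ Set.Icc (0:ℝ) 1, q + t • (p - q) ∈ W := by
      intro t ht
      have h := hWconv hq hp (by linarith [ht.2] : (0:ℝ) ≤ 1 - t) ht.1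
        (by ring : (1 - t) + t = 1)
      have heq2 : (1 - t) • q + t • p = q + t • (p - q) := by
        module
      rwa [heq2] at h
    have hderiv : ∀ t ∈ Set.Icc (0:ℝ) 1,
        HasDerivWithinAt f (b' (q + t • (p - q)) (p - q)) (Set.Icc (0:ℝ) 1) t := by
      intro t ht
      set z := q + t • (p - q) with hz
      have hzU : z ∈ interior C := hWsub (hmem t ht)
      have hg : HasDerivAt (fun s : ℝ => b (z + s • (p - q))) (b' z (p - q)) 0 := by
        rw [hasDerivAt_iff_tendsto_slope]
        have := hb' z hzU (p - q)
        refine this.congr' ?_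
        filter_upwards [self_mem_nhdsWithin] with s hs
        simp [slope_def_field]
      have hcomp : HasDerivAt f (b' z (p - q)) t := by
        have hshift : HasDerivAt (fun s : ℝ => s - t) 1 t := by
          simpa using (hasDerivAt_id t).sub_const t
        have hg' : HasDerivAt (fun s : ℝ => b (z + s • (p - q))) (b' z (p - q)) (t - t) := by
          rw [sub_self]; exact hg
        have hc2 : HasDerivAt ((fun s : ℝ => b (z + s • (p - q))) ∘ fun s : ℝ => s - t)
            (b' z (p - q) * 1) t := HasDerivAt.comp t hg' hshift
        have heqf : f = (fun s : ℝ => b (z + s • (p - q))) ∘ (fun s : ℝ => s - t) := by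
          funext s
          simp only [hf, hz, Function.comp]
          congr 1
          module
        rw [heqf]
        simpa using hc2
      exact hcomp.hasDerivWithinAt
    have hbound : ∀ t ∈ Set.Icc (0:ℝ) 1,
        ‖b' (q + t • (p - q)) (p - q)‖ ≤ M * ‖p - q‖ := by
      intro t ht
      calc ‖b' (q + t • (p - q)) (p - q)‖
          ≤ ‖b' (q + t • (p - q))‖ * ‖p - q‖ := (b' _).le_opNorm _
        _ ≤ M * ‖p - q‖ :=
            mul_le_mul_of_nonneg_right (hMle _ (hmem t ht)) (norm_nonneg _)
    have := Convex.norm_image_sub_le_of_norm_hasDerivWithin_le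
      hderiv hbound (convex_Icc (0:ℝ) 1)
      (Set.left_mem_Icc.mpr zero_le_one) (Set.right_mem_Icc.mpr zero_le_one)
    have h10 : f 1 = b p := by simp [hf]
    have h00 : f 0 = b q := by simp [hf]
    have hn : ‖(1:ℝ) - 0‖ = 1 := by norm_num
    rw [h10, h00, hn, mul_one] at this
    simpa [Real.norm_eq_abs] using this
  -- |b (x i) - b (y i)| ≤ M ‖x i - y i‖, via approach through the interior.
  have hbx : ∀ i, |b (x i) - b (y i)| ≤ M * ‖x i - y i‖ := by
    intro i
    set c : ℝ → X := fun s => x i + s • (y i - x i) with hc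
    have hmemW : ∀ s ∈ Set.Ioc (0:ℝ) 1, c s ∈ W := by
      intro s hs
      have hint : s • y i + (1 - s) • x i ∈ interior C :=
        hCconv.combo_interior_closure_mem_interior (hy i)
          (subset_closure (hx i)) hs.1 (by linarith [hs.2] : (0:ℝ) ≤ 1 - s)
          (by ring : s + (1 - s) = 1)
      have hxS : x i ∈ S :=
        subset_convexHull ℝ (Set.range x ∪ Set.range y) (Or.inl ⟨i, rfl⟩)
      have hyS : y i ∈ S :=
        subset_convexHull ℝ (Set.range x ∪ Set.range y) (Or.inr ⟨i, rfl⟩)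
      have hhull : s • y i + (1 - s) • x i ∈ S :=
        (convex_convexHull ℝ _) hyS hxS (le_of_lt hs.1)
          (by linarith [hs.2] : (0:ℝ) ≤ 1 - s) (by ring : s + (1 - s) = 1)
      have heq : s • y i + (1 - s) • x i = c s := by
        simp only [hc]; module
      exact ⟨heq ▸ hhull, heq ▸ hint⟩
    have hcC : ∀ s ∈ Set.Ioc (0:ℝ) 1, c s ∈ C :=
      fun s hs => interior_subset (hmemW s hs).2
    -- limit of b along c as s → 0⁺
    have hctend : Tendsto c (𝓝[>] (0:ℝ)) (𝓝 (x i)) := by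
      have : Tendsto c (𝓝 (0:ℝ)) (𝓝 (x i)) := by
        have : Continuous c := by continuity
        simpa [hc] using this.tendsto 0
      exact this.mono_left nhdsWithin_le_nhds
    have hIoc : ∀ᶠ s in 𝓝[>] (0:ℝ), s ∈ Set.Ioc (0:ℝ) 1 := by
      filter_upwards [self_mem_nhdsWithin,
        eventually_nhdsWithin_of_eventually_nhds
          (eventually_lt_nhds (by norm_num : (0:ℝ) < 1))] with s h1 h2
      exact ⟨h1, le_of_lt h2⟩
    have hbtend : Tendsto (fun s => b (c s)) (𝓝[>] (0:ℝ)) (𝓝 (b (x i))) := by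
      apply (hbcont (x i) (hx i)).tendsto.comp
      rw [tendsto_nhdsWithin_iff]
      refine ⟨hctend, ?_⟩
      filter_upwards [hIoc] with s hs using hcC s hs
    have habs : Tendsto (fun s => |b (c s) - b (y i)|) (𝓝[>] (0:ℝ))
        (𝓝 (|b (x i) - b (y i)|)) :=
      ((hbtend.sub tendsto_const_nhds).abs)
    refine le_of_tendsto habs ?_
    filter_upwards [hIoc] with s hs
    have h1 : |b (c s) - b (y i)| ≤ M * ‖c s - y i‖ :=
      key (c s) (hmemW s hs) (y i) (hyW i)
    have h2 : ‖c s - y i‖ ≤ ‖x i - y i‖ := by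
      have heq : c s - y i = (1 - s) • (x i - y i) := by
        simp only [hc]; module
      rw [heq, norm_smul, Real.norm_eq_abs,
        abs_of_nonneg (by linarith [hs.2] : (0:ℝ) ≤ 1 - s)]
      nlinarith [norm_nonneg (x i - y i), hs.1, hs.2]
    exact h1.trans (mul_le_mul_of_nonneg_left h2 (le_of_lt hM0))
  -- bound on the linear term
  have hb'x : ∀ i, |b' (y i) (x i - y i)| ≤ M * ‖x i - y i‖ := by
    intro i
    calc |b' (y i) (x i - y i)| = ‖b' (y i) (x i - y i)‖ := rfl
      _ ≤ ‖b' (y i)‖ * ‖x i - y i‖ := (b' _).le_opNorm _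
      _ ≤ M * ‖x i - y i‖ :=
          mul_le_mul_of_nonneg_right (hMle _ (hyW i)) (norm_nonneg _)
  -- squeeze
  have hsq : ∀ i, ‖b (x i) - b (y i) - b' (y i) (x i - y i)‖
      ≤ 2 * M * ‖x i - y i‖ := by
    intro i
    have := abs_sub (b (x i) - b (y i)) (b' (y i) (x i - y i))
    rw [Real.norm_eq_abs]
    calc |b (x i) - b (y i) - b' (y i) (x i - y i)|
        ≤ |b (x i) - b (y i)| + |b' (y i) (x i - y i)| := abs_sub _ _
      _ ≤ M * ‖x i - y i‖ + M * ‖x i - y i‖ := add_le_add (hbx i) (hb'x i)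
      _ = 2 * M * ‖x i - y i‖ := by ring
  have htend : Tendsto (fun i => 2 * M * ‖x i - y i‖) atTop (𝓝 0) := by
    have := hdist.const_mul (2 * M)
    simpa using this
  exact squeeze_zero_norm hsq htend
end

section
/- Under the Bregman setup, let x ∈ C and let S ⊆ U be nonempty. Suppose S = S' ∪ S'' where S' is bounded (possibly empty) and S'' is contained in a nonempty set V ⊆ U such that b is uniformly convex relative to ({x}, V) with a gauge ψ satisfying lim_{t→∞} ψ(t) = ∞, i.e., ψ : [0,∞) → [0,∞), ψ(t) > 0 for t > 0, ψ(t) → ∞ as t → ∞, and b(λx + (1−λ)y) + λ(1−λ)ψ(‖x−y‖) ≤ λ b(x) + (1−λ) b(y) for all y ∈ V and λ ∈ (0,1). If sup{B(x,y) : y ∈ S} < ∞, then S is bounded. -/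
open Filter Topology

/-- Under the Bregman setup, let `x ∈ C` and let `S ⊆ U` be nonempty
with `S = S' ∪ S''`, where `S'` is bounded and `S''` is contained in a nonempty set
`V ⊆ U` such that `b` is uniformly convex relative to `({x}, V)` with a gauge `ψ`
satisfying `ψ(t) → ∞` as `t → ∞`. If `sup{B(x,y) : y ∈ S} < ∞`, then `S` is bounded. -/
theorem bounded_of_bregman_divergence_bounded
    {X : Type*} [NormedAddCommGroup X] [NormedSpace ℝ X]
    (C : Set X) (hC : C.Nonempty) (hCconv : Convex ℝ C)
    (hU : (interior C).Nonempty)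
    (b : X → ℝ) (hbconv : ConvexOn ℝ C b)
    (b' : X → X →L[ℝ] ℝ)
    (hb' : ∀ y ∈ interior C, ∀ v : X,
      Tendsto (fun t : ℝ => (b (y + t • v) - b y) / t) (𝓝[≠] (0:ℝ)) (𝓝 (b' y v)))
    (x : X) (hx : x ∈ C)
    (S S' S'' V : Set X) (hS : S.Nonempty) (hSU : S ⊆ interior C)
    (hsplit : S = S' ∪ S'') (hS'bdd : Bornology.IsBounded S')
    (hVU : V ⊆ interior C) (hVne : V.Nonempty) (hS''V : S'' ⊆ V)
    (ψ : ℝ → ℝ) (hψpos : ∀ t : ℝ, 0 < t → 0 < ψ t)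
    (hψtop : Tendsto ψ atTop atTop)
    (huc : ∀ y ∈ V, ∀ l ∈ Set.Ioo (0:ℝ) 1,
      b (l • x + (1 - l) • y) + l * (1 - l) * ψ ‖x - y‖ ≤ l * b x + (1 - l) * b y)
    (γ : ℝ) (hγ : ∀ y ∈ S, b x - b y - b' y (x - y) ≤ γ) :
    Bornology.IsBounded S := by
  -- get M with ψ t > γ for t ≥ M
  obtain ⟨M, hM⟩ := (hψtop.eventually (eventually_gt_atTop γ)).exists_forall_of_atTop
  -- S'' is contained in a ball around x of radius M
  have hS''bdd : S'' ⊆ Metric.ball x M := by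
    intro y hy
    have hyV : y ∈ V := hS''V hy
    have hyS : y ∈ S := hsplit ▸ Or.inr hy
    have hyU : y ∈ interior C := hSU hyS
    -- key inequality: b' y (x - y) ≤ b x - b y - ψ ‖x - y‖
    have key : b' y (x - y) ≤ b x - b y - ψ ‖x - y‖ := by
      have hf : Tendsto (fun t : ℝ => (b (y + t • (x - y)) - b y) / t)
          (𝓝[>] (0:ℝ)) (𝓝 (b' y (x - y))) :=
        (hb' y hyU (x - y)).mono_left
          (nhdsWithin_mono _ (fun t ht => ne_of_gt ht))
      have hg : Tendsto (fun t : ℝ => b x - b y - (1 - t) * ψ ‖x - y‖)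
          (𝓝[>] (0:ℝ)) (𝓝 (b x - b y - ψ ‖x - y‖)) := by
        have : Tendsto (fun t : ℝ => b x - b y - (1 - t) * ψ ‖x - y‖)
            (𝓝 (0:ℝ)) (𝓝 (b x - b y - (1 - 0) * ψ ‖x - y‖)) := by
          exact (tendsto_const_nhds.sub (((tendsto_const_nhds.sub tendsto_id).mul tendsto_const_nhds)))
        simpa using this.mono_left nhdsWithin_le_nhds
      refine le_of_tendsto_of_tendsto hf hg ?_
      filter_upwards [Ioo_mem_nhdsGT_of_mem (by norm_num : (0:ℝ) ∈ Set.Ico 0 1)]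
        with t ht
      have h := huc y hyV t ht
      have hrw : t • x + (1 - t) • y = y + t • (x - y) := by
        simp [smul_sub, sub_smul]; abel
      rw [hrw] at h
      have ht0 : 0 < t := ht.1
      rw [div_le_iff₀ ht0]
      nlinarith [h]
    have hγy := hγ y hyS
    have : ψ ‖x - y‖ ≤ γ := by linarith
    by_contra hcon
    have hMle : M ≤ ‖x - y‖ := by
      have : ¬ dist y x < M := hcon
      rw [dist_eq_norm] at this
      rw [← norm_neg]
      simpa [neg_sub] using not_lt.mp this
    exact absurd (hM _ hMle) (not_lt.mpr this)
  have : S ⊆ S' ∪ Metric.ball x M := by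
    rw [hsplit]; exact Set.union_subset_union_right _ hS''bdd
  exact (hS'bdd.union Metric.isBounded_ball).subset this
end

section
/- Under the Bregman setup, fix x ∈ C and suppose there exists r_x ≥ 0 such that the set V := U ∩ {w ∈ X : ‖w‖ ≥ r_x} is nonempty and b is uniformly convex relative to ({x}, V) with a gauge ψ_x satisfying lim_{t→∞} ψ_x(t) = ∞, i.e., ψ_x : [0,∞) → [0,∞), ψ_x(t) > 0 for t > 0, ψ_x(t) → ∞ as t → ∞, and b(λx + (1−λ)y) + λ(1−λ)ψ_x(‖x−y‖) ≤ λ b(x) + (1−λ) b(y) for all y ∈ V and λ ∈ (0,1). Then for every γ ∈ [0,∞) the level set L₁(x,γ) := {y ∈ U : B(x,y) ≤ γ} is bounded. -/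
open Filter Topology

/-- Under the Bregman setup, fix `x ∈ C` and suppose there is
`r_x ≥ 0` such that `V := U ∩ {w : ‖w‖ ≥ r_x}` is nonempty and `b` is uniformly convex
relative to `({x}, V)` with a gauge `ψ_x` satisfying `ψ_x(t) → ∞` as `t → ∞`. Then for
every `γ ≥ 0` the level set `L₁(x,γ) := {y ∈ U : B(x,y) ≤ γ}` is bounded. -/
theorem bregman_first_type_level_sets_bounded
    {X : Type*} [NormedAddCommGroup X] [NormedSpace ℝ X]
    (C : Set X) (hC : C.Nonempty) (hCconv : Convex ℝ C)
    (hU : (interior C).Nonempty)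
    (b : X → ℝ) (hbconv : ConvexOn ℝ C b)
    (b' : X → X →L[ℝ] ℝ)
    (hb' : ∀ y ∈ interior C, ∀ v : X,
      Tendsto (fun t : ℝ => (b (y + t • v) - b y) / t) (𝓝[≠] (0:ℝ)) (𝓝 (b' y v)))
    (x : X) (hx : x ∈ C)
    (rx : ℝ) (hrx : 0 ≤ rx)
    (hVne : (interior C ∩ {w : X | rx ≤ ‖w‖}).Nonempty)
    (ψx : ℝ → ℝ) (hψpos : ∀ t : ℝ, 0 < t → 0 < ψx t)
    (hψtop : Tendsto ψx atTop atTop)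
    (huc : ∀ y ∈ interior C ∩ {w : X | rx ≤ ‖w‖}, ∀ l ∈ Set.Ioo (0:ℝ) 1,
      b (l • x + (1 - l) • y) + l * (1 - l) * ψx ‖x - y‖ ≤ l * b x + (1 - l) * b y) :
    ∀ γ : ℝ, 0 ≤ γ →
      Bornology.IsBounded {y ∈ interior C | b x - b y - b' y (x - y) ≤ γ} := by

  intro γ hγ
  -- choose M with ψx t > γ for t ≥ M
  obtain ⟨M, hM⟩ := (hψtop.eventually_gt_atTop γ).exists_forall_of_atTop
  rw [isBounded_iff_forall_norm_le]
  refine ⟨max rx (‖x‖ + |M|), ?_⟩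
  rintro y ⟨hyU, hyB⟩
  rcases le_or_gt rx ‖y‖ with hry | hry
  · -- y ∈ V : key inequality  b' y (x - y) ≤ b x - b y - ψx ‖x-y‖
    have hyV : y ∈ interior C ∩ {w : X | rx ≤ ‖w‖} := ⟨hyU, hry⟩
    have key : b' y (x - y) ≤ b x - b y - ψx ‖x - y‖ := by
      have htend := (hb' y hyU (x - y)).mono_left
        (nhdsWithin_mono _ (fun t (ht : t ∈ Set.Ioi (0:ℝ)) => ne_of_gt ht))
      have htend2 : Tendsto (fun l : ℝ => b x - b y - (1 - l) * ψx ‖x - y‖)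
          (𝓝[>] (0:ℝ)) (𝓝 (b x - b y - ψx ‖x - y‖)) := by
        have : ContinuousAt (fun l : ℝ => b x - b y - (1 - l) * ψx ‖x - y‖) 0 := by
          fun_prop
        simpa using this.tendsto.mono_left nhdsWithin_le_nhds
      refine le_of_tendsto_of_tendsto htend htend2 ?_
      filter_upwards [Ioo_mem_nhdsGT_of_mem (by simp : (0:ℝ) ∈ Set.Ico 0 1)] with l hl
      have h := huc y hyV l hl
      have heq : l • x + (1 - l) • y = y + l • (x - y) := by module
      rw [heq] at h
      rw [div_le_iff₀ hl.1]
      nlinarith [hl.1, hl.2]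
    have h1 : ψx ‖x - y‖ ≤ γ := by linarith
    have h2 : ‖x - y‖ < M := by
      by_contra h
      exact absurd h1 (not_le.mpr (hM _ (le_of_not_gt h)))
    have : ‖y‖ ≤ ‖x‖ + ‖x - y‖ := by
      have hy : y = x - (x - y) := by abel
      calc ‖y‖ = ‖x - (x - y)‖ := by rw [← hy]
        _ ≤ ‖x‖ + ‖x - y‖ := norm_sub_le _ _
    have : ‖y‖ ≤ ‖x‖ + |M| := by
      have := le_abs_self M
      linarith
    exact le_trans this (le_max_right _ _)
  · exact le_trans hry.le (le_max_left _ _)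
end

section
/- Let X ≠ {0} be a real normed space, C ⊆ X a nonempty convex set whose interior U := int(C) is nonempty, and b : X → ℝ a function that is continuous on C and twice continuously Fréchet differentiable on U: there exist maps b' : U → X* and b'' : U → (continuous bilinear forms on X) with b' the Fréchet derivative of b at each z ∈ U, b''(z) the Fréchet derivative of b' at each z ∈ U, and z ↦ b''(z) continuous on U. Let S ⊆ U be nonempty and convex and suppose η > 0 satisfies b''(z)(w,w) ≥ η‖w‖² for every z ∈ S and every w ∈ X. Then b is strongly convex on S with parameter η, and moreover b is strongly convex with the same parameter η on cl(S) ∩ C: for all x, y ∈ cl(S) ∩ C and λ ∈ (0,1), b(λx + (1−λ)y) + (1/2)η λ(1−λ)‖x − y‖² ≤ λ b(x) + (1−λ) b(y). -/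
/-!
On a segment `γ t = x + t • (y - x)` of `S`, the function `b ∘ γ` has second derivative
`b'' (γ t) (y - x) (y - x) ≥ η ‖x - y‖ ^ 2`, so `t ↦ b (γ t) - η ‖x - y‖ ^ 2 t ^ 2 / 2` is convex
on `[0, 1]`; comparing its values at `0`, `1` and `t` is the strong convexity inequality for
`x, y`. The inequality passes to `closure S ∩ C` because both of its sides are continuous on `C`.
-/

lemma strongConvexOn_of_hasDerivWithinAt2_ge {D : Set ℝ} (hD : Convex ℝ D) {f f' f'' : ℝ → ℝ}
    {m : ℝ} (hf : ContinuousOn f D)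
    (hf' : ∀ x ∈ interior D, HasDerivWithinAt f (f' x) (interior D) x)
    (hf'' : ∀ x ∈ interior D, HasDerivWithinAt f' (f'' x) (interior D) x)
    (hm : ∀ x ∈ interior D, m ≤ f'' x) : StrongConvexOn D m f := by
  simp only [strongConvexOn_iff_convex, Real.norm_eq_abs, sq_abs]
  refine convexOn_of_hasDerivWithinAt2_nonneg hD (f' := fun x ↦ f' x - m * x)
    (f'' := fun x ↦ f'' x - m) (by fun_prop) (fun x hx ↦ ?_) (fun x hx ↦ ?_)
    (fun x hx ↦ sub_nonneg.2 (hm x hx))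
  · exact ((hf' x hx).sub ((hasDerivAt_pow 2 x).const_mul (m / 2)).hasDerivWithinAt).congr_deriv
      (by push_cast; ring)
  · exact ((hf'' x hx).sub ((hasDerivWithinAt_id x _).const_mul m)).congr_deriv (by ring)

section NormedSpace

variable {E : Type*} [NormedAddCommGroup E] [NormedSpace ℝ E] {s : Set E} {f : E → ℝ} {m : ℝ}

lemma strongConvexOn_of_comp_lineMap (hs : Convex ℝ s)
    (h : ∀ x ∈ s, ∀ y ∈ s,
      StrongConvexOn (Set.Icc (0 : ℝ) 1) (m * ‖x - y‖ ^ 2) (f ∘ AffineMap.lineMap x y)) :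
    StrongConvexOn s m f := by
  refine ⟨hs, fun x hx y hy a b ha hb hab ↦ ?_⟩
  have := (h x hx y hy).2 (Set.left_mem_Icc.2 zero_le_one) (Set.right_mem_Icc.2 zero_le_one)
    ha hb hab
  simp only [Function.comp_apply, smul_eq_mul, mul_zero, mul_one, zero_add,
    AffineMap.lineMap_apply_zero, AffineMap.lineMap_apply_one, zero_sub, norm_neg, norm_one,
    one_pow] at this
  rw [AffineMap.lineMap_apply_module, ← eq_sub_of_add_eq hab] at this
  simp only [smul_eq_mul]
  linarith

lemma strongConvexOn_of_hasFDerivAt2 {f' : E → E →L[ℝ] ℝ} {f'' : E → E →L[ℝ] E →L[ℝ] ℝ}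
    (hs : Convex ℝ s) (hf : ∀ z ∈ s, HasFDerivAt f (f' z) z)
    (hf' : ∀ z ∈ s, HasFDerivAt f' (f'' z) z) (hm : ∀ z ∈ s, ∀ w, m * ‖w‖ ^ 2 ≤ f'' z w w) :
    StrongConvexOn s m f := by
  refine strongConvexOn_of_comp_lineMap hs fun x hx y hy ↦ ?_
  set γ := AffineMap.lineMap (k := ℝ) x y
  have hγ : ∀ t ∈ Set.Icc (0 : ℝ) 1, γ t ∈ s := fun t ht ↦ hs.lineMap_mem hx hy ht
  have hγ' : ∀ t, HasDerivAt γ (y - x) t := fun t ↦ AffineMap.hasDerivAt_lineMap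
  have hderiv : ∀ t ∈ Set.Icc (0 : ℝ) 1, HasDerivAt (f ∘ γ) (f' (γ t) (y - x)) t :=
    fun t ht ↦ (hf _ (hγ t ht)).comp_hasDerivAt t (hγ' t)
  have hderiv2 : ∀ t ∈ Set.Icc (0 : ℝ) 1,
      HasDerivAt (fun t ↦ f' (γ t) (y - x)) (f'' (γ t) (y - x) (y - x)) t := fun t ht ↦
    (((hf' _ (hγ t ht)).comp_hasDerivAt t (hγ' t)).clm_apply
      (hasDerivAt_const t (y - x))).congr_deriv (by rw [map_zero, add_zero])
  refine strongConvexOn_of_hasDerivWithinAt2_ge (convex_Icc 0 1)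
    (fun t ht ↦ (hderiv t ht).continuousAt.continuousWithinAt)
    (fun t ht ↦ (hderiv t (interior_subset ht)).hasDerivWithinAt)
    (fun t ht ↦ (hderiv2 t (interior_subset ht)).hasDerivWithinAt) fun t ht ↦ ?_
  simpa only [norm_sub_rev] using hm _ (hγ t (interior_subset ht)) (y - x)

lemma UniformConvexOn.closure_inter {φ : ℝ → ℝ} {C : Set E} (hf : UniformConvexOn s φ f)
    (hφ : Continuous φ) (hC : Convex ℝ C) (hsC : s ⊆ C) (hfC : ContinuousOn f C) :
    UniformConvexOn (closure s ∩ C) φ f := by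
  refine ⟨hf.1.closure.inter hC, fun x hx y hy a b ha hb hab ↦ ?_⟩
  have hxy : (x, y) ∈ closure (s ×ˢ s) := by
    rw [closure_prod_eq]; exact ⟨hx.1, hy.1⟩
  have hcomb : Set.MapsTo (fun p : E × E ↦ a • p.1 + b • p.2) (s ×ˢ s) C :=
    fun p hp ↦ hsC (hf.1 hp.1 hp.2 ha hb hab)
  have hfst : Set.MapsTo Prod.fst (s ×ˢ s) C := fun p hp ↦ hsC hp.1
  have hsnd : Set.MapsTo Prod.snd (s ×ˢ s) C := fun p hp ↦ hsC hp.2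
  have hlhs := (hfC _ (hC hx.2 hy.2 ha hb hab)).comp (x := (x, y))
    (by fun_prop : Continuous fun p : E × E ↦ a • p.1 + b • p.2).continuousWithinAt hcomb
  have hfx := (hfC x hx.2).comp (x := (x, y)) continuousAt_fst.continuousWithinAt hfst
  have hfy := (hfC y hy.2).comp (x := (x, y)) continuousAt_snd.continuousWithinAt hsnd
  have hφxy : Continuous fun p : E × E ↦ a * b * φ ‖p.1 - p.2‖ := by fun_prop
  exact ContinuousWithinAt.closure_le hxy hlhs
    (((hfx.const_smul a).add (hfy.const_smul b)).sub hφxy.continuousWithinAt)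
    fun p hp ↦ hf.2 hp.1 hp.2 ha hb hab

lemma StrongConvexOn.apply_convexCombo_add_le (hf : StrongConvexOn s m f) {x y : E}
    (hx : x ∈ s) (hy : y ∈ s) {l : ℝ} (hl : l ∈ Set.Ioo (0 : ℝ) 1) :
    f (l • x + (1 - l) • y) + (1 / 2) * m * l * (1 - l) * ‖x - y‖ ^ 2
      ≤ l * f x + (1 - l) * f y := by
  have := hf.2 hx hy hl.1.le (sub_nonneg.2 hl.2.le) (add_sub_cancel l 1)
  simp only [smul_eq_mul] at this
  linarith

end NormedSpace

theorem strong_convexity_from_positive_definite_hessian_general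
    {X : Type*} [NormedAddCommGroup X] [NormedSpace ℝ X]
    (C : Set X) (hCconv : Convex ℝ C)
    (b : X → ℝ) (hbcont : ContinuousOn b C)
    (b' : X → X →L[ℝ] ℝ) (b'' : X → X →L[ℝ] X →L[ℝ] ℝ)
    (hb' : ∀ z ∈ interior C, HasFDerivAt b (b' z) z)
    (hb'' : ∀ z ∈ interior C, HasFDerivAt b' (b'' z) z)
    (S : Set X) (hSU : S ⊆ interior C) (hSconv : Convex ℝ S)
    (η : ℝ)
    (hpos : ∀ z ∈ S, ∀ w : X, η * ‖w‖ ^ 2 ≤ b'' z w w) :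
    (∀ x ∈ S, ∀ y ∈ S, ∀ l ∈ Set.Ioo (0:ℝ) 1,
      b (l • x + (1 - l) • y) + (1 / 2) * η * l * (1 - l) * ‖x - y‖ ^ 2
        ≤ l * b x + (1 - l) * b y) ∧
    (∀ x ∈ closure S ∩ C, ∀ y ∈ closure S ∩ C, ∀ l ∈ Set.Ioo (0:ℝ) 1,
      b (l • x + (1 - l) • y) + (1 / 2) * η * l * (1 - l) * ‖x - y‖ ^ 2
        ≤ l * b x + (1 - l) * b y) := by
  have hS : StrongConvexOn S η b :=
    strongConvexOn_of_hasFDerivAt2 hSconv (fun z hz ↦ hb' z (hSU hz))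
      (fun z hz ↦ hb'' z (hSU hz)) hpos
  have hSC : StrongConvexOn (closure S ∩ C) η b :=
    UniformConvexOn.closure_inter hS (by fun_prop) hCconv
      (hSU.trans interior_subset) hbcont
  exact ⟨fun x hx y hy l hl ↦ hS.apply_convexCombo_add_le hx hy hl,
    fun x hx y hy l hl ↦ hSC.apply_convexCombo_add_le hx hy hl⟩

/-- Let `X ≠ {0}` be a real normed space, `C` a nonempty convex set
with nonempty interior `U`, and `b : X → ℝ` continuous on `C` and twice continuously
Fréchet differentiable on `U`. If `S ⊆ U` is nonempty and convex and `η > 0` satisfies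
`b''(z)(w,w) ≥ η‖w‖²` for every `z ∈ S` and `w ∈ X`, then `b` is strongly convex on `S`
with parameter `η`, and moreover strongly convex with the same parameter on
`cl(S) ∩ C`. -/
theorem strong_convexity_from_positive_definite_hessian
    {X : Type*} [NormedAddCommGroup X] [NormedSpace ℝ X] [Nontrivial X]
    (C : Set X) (hC : C.Nonempty) (hCconv : Convex ℝ C)
    (hU : (interior C).Nonempty)
    (b : X → ℝ) (hbcont : ContinuousOn b C)
    (b' : X → X →L[ℝ] ℝ) (b'' : X → X →L[ℝ] X →L[ℝ] ℝ)
    (hb' : ∀ z ∈ interior C, HasFDerivAt b (b' z) z)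
    (hb'' : ∀ z ∈ interior C, HasFDerivAt b' (b'' z) z)
    (hb''cont : ContinuousOn b'' (interior C))
    (S : Set X) (hSne : S.Nonempty) (hSU : S ⊆ interior C) (hSconv : Convex ℝ S)
    (η : ℝ) (hη : 0 < η)
    (hpos : ∀ z ∈ S, ∀ w : X, η * ‖w‖ ^ 2 ≤ b'' z w w) :
    (∀ x ∈ S, ∀ y ∈ S, ∀ l ∈ Set.Ioo (0:ℝ) 1,
      b (l • x + (1 - l) • y) + (1 / 2) * η * l * (1 - l) * ‖x - y‖ ^ 2
        ≤ l * b x + (1 - l) * b y) ∧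
    (∀ x ∈ closure S ∩ C, ∀ y ∈ closure S ∩ C, ∀ l ∈ Set.Ioo (0:ℝ) 1,
      b (l • x + (1 - l) • y) + (1 / 2) * η * l * (1 - l) * ‖x - y‖ ^ 2
        ≤ l * b x + (1 - l) * b y) :=
  strong_convexity_from_positive_definite_hessian_general C hCconv b hbcont b' b'' hb' hb'' S hSU
    hSconv η hpos
end

section
/- Let ι be an index type and, for each i ∈ ι, let E_i be a real normed space, S_i ⊆ E_i a nonempty convex set, and b_i : E_i → ℝ a function that is strongly convex on S_i with parameter μ_i > 0. Assume μ := inf_i μ_i > 0. Let X := ℓ²(ι; E) be the space of families x = (x_i)_{i∈ι} with x_i ∈ E_i and Σ_i ‖x_i‖² < ∞, with norm ‖x‖ := (Σ_i ‖x_i‖²)^{1/2}. Suppose that for every x ∈ X with x_i ∈ S_i for all i, the family (b_i(x_i))_{i∈ι} is summable, and define b : X → ℝ on such points by b(x) := Σ_i b_i(x_i). Then b is strongly convex with parameter μ on the set S := {x ∈ X : x_i ∈ S_i for all i}: for all x, y ∈ S and λ ∈ (0,1), b(λx + (1−λ)y) + (1/2)μ λ(1−λ)‖x − y‖² ≤ λ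 b(x) + (1−λ) b(y). -/
/-! The squared ℓ²-norm of `x - y` is the sum of the squared coordinate norms, so the
coordinatewise strong-convexity inequalities, each weakened to the common parameter `μ ≤ μᵢ`,
add up to the inequality for `b`. -/

theorem lp.hasSum_norm_sq {ι : Type*} {E : ι → Type*} [∀ i, NormedAddCommGroup (E i)]
    (x : lp E 2) : HasSum (fun i => ‖x i‖ ^ 2) (‖x‖ ^ 2) := by
  simpa using lp.hasSum_norm (p := 2) (by norm_num) x

theorem hasSum_add_mul_le_mul_add_mul {ι : Type*} {f g h d : ι → ℝ} {F G H D a b c : ℝ}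
    (hf : HasSum f F) (hg : HasSum g G) (hh : HasSum h H) (hd : HasSum d D)
    (hle : ∀ i, f i + c * d i ≤ a * g i + b * h i) :
    F + c * D ≤ a * G + b * H :=
  hasSum_le hle (hf.add (hd.mul_left c)) ((hg.mul_left a).add (hh.mul_left b))

theorem strongConvexity_ineq_of_le {E : Type*} [SeminormedAddCommGroup E] [Module ℝ E]
    {f : E → ℝ} {x y : E} {μ ν l : ℝ} (hμν : μ ≤ ν) (hl₀ : 0 ≤ l) (hl₁ : l ≤ 1)
    (h : f (l • x + (1 - l) • y) + (1 / 2) * ν * l * (1 - l) * ‖x - y‖ ^ 2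
      ≤ l * f x + (1 - l) * f y) :
    f (l • x + (1 - l) • y) + (1 / 2) * μ * l * (1 - l) * ‖x - y‖ ^ 2
      ≤ l * f x + (1 - l) * f y := by
  have : (1 / 2) * μ * l * (1 - l) * ‖x - y‖ ^ 2 ≤ (1 / 2) * ν * l * (1 - l) * ‖x - y‖ ^ 2 := by
    have := sub_nonneg.2 hl₁
    gcongr
  linarith

theorem strong_convexity_of_lp_sum_general
    {ι : Type*} {E : ι → Type*} [∀ i, NormedAddCommGroup (E i)]
    [∀ i, NormedSpace ℝ (E i)]
    (S : ∀ i, Set (E i)) (hSconv : ∀ i, Convex ℝ (S i))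
    (bf : ∀ i, E i → ℝ) (μi : ι → ℝ) (hμi : ∀ i, 0 < μi i)
    (hsc : ∀ i, ∀ x ∈ S i, ∀ y ∈ S i, ∀ l ∈ Set.Ioo (0:ℝ) 1,
      bf i (l • x + (1 - l) • y) + (1 / 2) * μi i * l * (1 - l) * ‖x - y‖ ^ 2
        ≤ l * bf i x + (1 - l) * bf i y)
    (μ : ℝ) (hμdef : μ = ⨅ i, μi i)
    (hsummable : ∀ x : lp E 2, (∀ i, x i ∈ S i) → Summable fun i => bf i (x i))
    (b : lp E 2 → ℝ)
    (hb : ∀ x : lp E 2, (∀ i, x i ∈ S i) → b x = ∑' i, bf i (x i)) :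
    ∀ x : lp E 2, (∀ i, x i ∈ S i) → ∀ y : lp E 2, (∀ i, y i ∈ S i) →
      ∀ l ∈ Set.Ioo (0:ℝ) 1,
        b (l • x + (1 - l) • y) + (1 / 2) * μ * l * (1 - l) * ‖x - y‖ ^ 2
          ≤ l * b x + (1 - l) * b y := by
  intro x hx y hy l hl
  have hz : ∀ i, (l • x + (1 - l) • y) i ∈ S i := fun i =>
    hSconv i (hx i) (hy i) hl.1.le (sub_pos.2 hl.2).le (by ring)
  have hμle : ∀ i, μ ≤ μi i := fun i =>
    hμdef ▸ ciInf_le ⟨0, Set.forall_mem_range.2 fun j => (hμi j).le⟩ i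
  rw [hb _ hz, hb x hx, hb y hy]
  refine hasSum_add_mul_le_mul_add_mul (hsummable _ hz).hasSum (hsummable x hx).hasSum
    (hsummable y hy).hasSum (lp.hasSum_norm_sq (x - y)) fun i => ?_
  exact strongConvexity_ineq_of_le (hμle i) hl.1.le hl.2.le
    (hsc i (x i) (hx i) (y i) (hy i) l hl)

/-- Strong convexity of an ℓ²-direct sum of strongly convex functions:
if each `b_i` is strongly convex on `S_i ⊆ E_i` with parameter `μ_i > 0` and
`μ := inf_i μ_i > 0`, and `b(x) := Σ_i b_i(x_i)` is well defined (the family is summable)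
on `S := {x ∈ ℓ²(ι;E) : x_i ∈ S_i ∀i}`, then `b` is strongly convex on `S` with
parameter `μ`. -/
theorem strong_convexity_of_lp_sum
    {ι : Type*} {E : ι → Type*} [∀ i, NormedAddCommGroup (E i)]
    [∀ i, NormedSpace ℝ (E i)]
    (S : ∀ i, Set (E i)) (hSne : ∀ i, (S i).Nonempty) (hSconv : ∀ i, Convex ℝ (S i))
    (bf : ∀ i, E i → ℝ) (μi : ι → ℝ) (hμi : ∀ i, 0 < μi i)
    (hsc : ∀ i, ∀ x ∈ S i, ∀ y ∈ S i, ∀ l ∈ Set.Ioo (0:ℝ) 1,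
      bf i (l • x + (1 - l) • y) + (1 / 2) * μi i * l * (1 - l) * ‖x - y‖ ^ 2
        ≤ l * bf i x + (1 - l) * bf i y)
    (μ : ℝ) (hμdef : μ = ⨅ i, μi i) (hμpos : 0 < μ)
    (hsummable : ∀ x : lp E 2, (∀ i, x i ∈ S i) → Summable fun i => bf i (x i))
    (b : lp E 2 → ℝ)
    (hb : ∀ x : lp E 2, (∀ i, x i ∈ S i) → b x = ∑' i, bf i (x i)) :
    ∀ x : lp E 2, (∀ i, x i ∈ S i) → ∀ y : lp E 2, (∀ i, y i ∈ S i) →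
      ∀ l ∈ Set.Ioo (0:ℝ) 1,
        b (l • x + (1 - l) • y) + (1 / 2) * μ * l * (1 - l) * ‖x - y‖ ^ 2
          ≤ l * b x + (1 - l) * b y :=
  strong_convexity_of_lp_sum_general S hSconv bf μi hμi hsc μ hμdef hsummable b hb
end

section
/- Let n ≥ 1 and let ‖·‖ be an arbitrary norm on ℝⁿ. Let U := (0,∞)ⁿ and b(z) := Σ_{k=1}^n z_k log(z_k) for z ∈ U (the negative Boltzmann–Gibbs–Shannon entropy). Then b is not uniformly convex on U: there is no function ψ : (0,∞) → (0,∞) such that b(λx + (1−λ)y) + λ(1−λ)ψ(‖x − y‖) ≤ λ b(x) + (1−λ) b(y) for all x, y ∈ U with x ≠ y and all λ ∈ (0,1). -/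
/-- The negative Boltzmann–Gibbs–Shannon entropy
`b(z) = Σ z_k log z_k` is not uniformly convex on `U = (0,∞)ⁿ` with respect to an
arbitrary norm `N` on `ℝⁿ`: there is no gauge `ψ : (0,∞) → (0,∞)` such that
`b(λx + (1−λ)y) + λ(1−λ)ψ(N(x−y)) ≤ λ b(x) + (1−λ) b(y)` for all distinct
`x, y ∈ U` and all `λ ∈ (0,1)`. -/
theorem shannon_entropy_not_uniformly_convex
    (n : ℕ) (hn : 1 ≤ n) (N : (Fin n → ℝ) → ℝ)
    (hN_add : ∀ v w : Fin n → ℝ, N (v + w) ≤ N v + N w)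
    (hN_smul : ∀ (a : ℝ) (v : Fin n → ℝ), N (a • v) = |a| * N v)
    (hN_def : ∀ v : Fin n → ℝ, N v = 0 → v = 0) :
    ¬ ∃ ψ : ℝ → ℝ, (∀ t : ℝ, 0 < t → 0 < ψ t) ∧
      ∀ x y : Fin n → ℝ, (∀ k, 0 < x k) → (∀ k, 0 < y k) → x ≠ y →
      ∀ l ∈ Set.Ioo (0:ℝ) 1,
        (∑ k, (l * x k + (1 - l) * y k) * Real.log (l * x k + (1 - l) * y k))
            + l * (1 - l) * ψ (N (x - y))
          ≤ l * ∑ k, x k * Real.log (x k)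
            + (1 - l) * ∑ k, y k * Real.log (y k) := by
  rintro ⟨ψ, hψpos, hψ⟩
  -- the all-ones vector
  have hone : (fun _ => (1:ℝ) : Fin n → ℝ) ≠ 0 := by
    intro h
    have := congrFun h ⟨0, hn⟩
    norm_num at this
  have hN0 : N 0 = 0 := by
    have := hN_smul 0 0
    simpa using this
  have hNneg : N (-(fun _ => (1:ℝ))) = N (fun _ => (1:ℝ)) := by
    have := hN_smul (-1) (fun _ => (1:ℝ))
    simpa using this
  have hNo_nonneg : 0 ≤ N (fun _ => (1:ℝ)) := by
    have h1 := hN_add (fun _ => (1:ℝ)) (-(fun _ => (1:ℝ)))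
    simp only [add_neg_cancel, hN0, hNneg] at h1
    linarith
  have hNo : 0 < N (fun _ => (1:ℝ)) :=
    lt_of_le_of_ne hNo_nonneg (fun h => hone (hN_def _ h.symm))
  obtain ⟨c, hcdef⟩ : ∃ c : ℝ, c = ψ (N (fun _ => (1:ℝ))) := ⟨_, rfl⟩
  have hcpos : 0 < c := hcdef ▸ hψpos _ hNo
  have hm1 : (1:ℝ) ≤ (n:ℝ) := by exact_mod_cast hn
  obtain ⟨T, hT⟩ : ∃ T : ℝ, T = (n:ℝ) / c + 1 := ⟨_, rfl⟩
  have hTpos : 0 < T := by rw [hT]; positivity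
  have hcT : (n:ℝ) < c * T := by
    have h : c * T = (n:ℝ) + c := by rw [hT]; field_simp
    linarith
  -- apply uniform convexity to x = T+1, y = T, l = 1/2
  have key := hψ (fun _ => T + 1) (fun _ => T) (fun _ => by show (0:ℝ) < T + 1; linarith) (fun _ => hTpos)
    (by
      intro h
      have := congrFun h ⟨0, hn⟩
      linarith)
    (1/2) ⟨by norm_num, by norm_num⟩
  have hdiff : ((fun _ => T + 1) - fun _ => T : Fin n → ℝ) = (fun _ => (1:ℝ)) := by
    funext k; simp
  rw [hdiff, ← hcdef] at key
  simp only [Finset.sum_const, Finset.card_univ, Fintype.card_fin, nsmul_eq_mul] at key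
  have hmid : (1/2 * (T + 1) + (1 - 1/2) * T) = T + 1/2 := by ring
  rw [hmid] at key
  -- log estimates
  have hspos : 0 < T + 1/2 := by linarith
  have hA : Real.log (T + 1) - Real.log (T + 1/2) ≤ 1 / (2 * T + 1) := by
    have h1 : Real.log ((T + 1) / (T + 1/2)) ≤ (T + 1) / (T + 1/2) - 1 :=
      Real.log_le_sub_one_of_pos (by positivity)
    rw [Real.log_div (by linarith) (by linarith)] at h1
    have h2 : (T + 1) / (T + 1/2) - 1 = 1 / (2 * T + 1) := by
      field_simp
      ring
    linarith
  have hB : Real.log T - Real.log (T + 1/2) ≤ -(1 / (2 * T + 1)) := by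
    have h1 : Real.log (T / (T + 1/2)) ≤ T / (T + 1/2) - 1 :=
      Real.log_le_sub_one_of_pos (by positivity)
    rw [Real.log_div (by linarith) (by linarith)] at h1
    have h2 : T / (T + 1/2) - 1 = -(1 / (2 * T + 1)) := by
      field_simp
      ring
    linarith
  have hmpos : (0:ℝ) < (n:ℝ) := by linarith
  have h1 : (n:ℝ) * (T + 1) * (Real.log (T + 1) - Real.log (T + 1/2))
      ≤ (n:ℝ) * (T + 1) * (1 / (2 * T + 1)) :=
    mul_le_mul_of_nonneg_left hA (by positivity)
  have h2 : (n:ℝ) * T * (Real.log T - Real.log (T + 1/2))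
      ≤ (n:ℝ) * T * (-(1 / (2 * T + 1))) :=
    mul_le_mul_of_nonneg_left hB (by positivity)
  have hden : (0:ℝ) < 2 * T + 1 := by linarith
  -- from key: c/4 ≤ ½n(T+1)·A + ½nT·B  (linear in the log atoms)
  have hgap : c / 4 ≤ (n:ℝ) * (T + 1) * (Real.log (T + 1) - Real.log (T + 1/2)) / 2
      + (n:ℝ) * T * (Real.log T - Real.log (T + 1/2)) / 2 := by
    nlinarith [key]
  have e1 : (n:ℝ) * (T + 1) * (1 / (2 * T + 1)) / 2 + (n:ℝ) * T * (-(1 / (2 * T + 1))) / 2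
      = (n:ℝ) / (2 * (2 * T + 1)) := by
    field_simp
    ring
  have hfinal : c / 4 ≤ (n:ℝ) / (2 * (2 * T + 1)) := by linarith
  -- contradiction: c(2T+1) ≤ 2n but cT > n
  have hcon : c * (2 * T + 1) ≤ 2 * (n:ℝ) := by
    rw [div_le_div_iff₀ (by norm_num) (by positivity)] at hfinal
    linarith
  nlinarith [hcT, hcpos, hcon]
end

section
/- Let n ≥ 1 and let ‖·‖ be an arbitrary norm on ℝⁿ. Let U := (0,∞)ⁿ and let b(z) := −Σ_{k=1}^n log(z_k) for z ∈ U (the negative Burg entropy). Then for every x ∈ U there exists r_x > 0 such that for every y ∈ U with ‖y‖ > r_x and every λ ∈ (0,1): b(λx + (1−λ)y) + λ(1−λ)·(1/4)·log(1 + ‖x − y‖) ≤ λ b(x) + (1−λ) b(y). In other words, b is uniformly convex relative to ({x}, {w ∈ U : ‖w‖ > r_x}) with relative gauge ψ(t) = (1/4)log(1 + t). -/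
open Real

lemma burg_core (a b l : ℝ) (ha : 0 < a) (hb : 1 < b) (hl : 0 < l) (hl1 : l < 1)
    (hL : 7 + 2 * Real.log a ≤ Real.log b) :
    l * Real.log a + (1 - l) * Real.log b + l * (1 - l) * (1 / 2) * Real.log b
      ≤ Real.log (l * a + (1 - l) * b) := by
  have hb0 : 0 < b := lt_trans one_pos hb
  have hs : 0 < 1 - l := by linarith
  have hL0 : 0 < Real.log b := Real.log_pos hb
  set L := Real.log b with hLdef
  have hloga : Real.log a ≤ (L - 7) / 2 := by linarith
  rcases le_or_gt l (1 / 2) with hhalf | hhalf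
  · have hmono : Real.log ((1 - l) * b) ≤ Real.log (l * a + (1 - l) * b) :=
      Real.log_le_log (by positivity) (by nlinarith)
    rw [Real.log_mul (ne_of_gt hs) (ne_of_gt hb0)] at hmono
    have hlog1l : -(2 * l) ≤ Real.log (1 - l) := by
      have h := Real.log_le_sub_one_of_pos (show (0:ℝ) < (1 - l)⁻¹ by positivity)
      rw [Real.log_inv] at h
      have h2 : (1 - l)⁻¹ ≤ 1 + 2 * l := by
        rw [inv_le_iff_one_le_mul₀ hs]
        nlinarith
      linarith
    have key : l * Real.log a ≤ l * ((L - 7) / 2) := mul_le_mul_of_nonneg_left hloga hl.le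
    nlinarith [mul_nonneg (mul_nonneg hl.le hl.le) hL0.le, mul_pos hl hL0]
  · have hmono : Real.log (l * (a + (1 - l) * b)) ≤ Real.log (l * a + (1 - l) * b) := by
      apply Real.log_le_log (by positivity)
      nlinarith [mul_nonneg (mul_nonneg hs.le hs.le) hb0.le]
    rw [Real.log_mul (ne_of_gt hl) (by positivity)] at hmono
    have hrw : a + (1 - l) * b = a * (1 + (1 - l) * b / a) := by field_simp
    rw [hrw, Real.log_mul (ne_of_gt ha) (by positivity)] at hmono
    have hlogl : -(2 * (1 - l)) ≤ Real.log l := by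
      have h := Real.log_le_sub_one_of_pos (show (0:ℝ) < l⁻¹ by positivity)
      rw [Real.log_inv] at h
      have h2 : l⁻¹ ≤ 1 + 2 * (1 - l) := by
        rw [inv_le_iff_one_le_mul₀ hl]
        nlinarith
      linarith
    set U : ℝ := b / (2 * a) with hUdef
    have hU0 : 0 < U := by positivity
    have hθ0 : (0:ℝ) ≤ 2 * (1 - l) := by linarith
    have hθ1 : 2 * (1 - l) ≤ 1 := by linarith
    have hgm := Real.geom_mean_le_arith_mean2_weighted
      (by linarith : (0:ℝ) ≤ 1 - 2 * (1 - l)) hθ0 zero_le_one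
      (by positivity : (0:ℝ) ≤ 1 + U) (by ring)
    have h5 : (1 + U) ^ (2 * (1 - l)) ≤ 1 + 2 * (1 - l) * U := by
      calc (1 + U) ^ (2 * (1 - l)) = 1 ^ (1 - 2 * (1 - l)) * (1 + U) ^ (2 * (1 - l)) := by
            rw [Real.one_rpow, one_mul]
        _ ≤ (1 - 2 * (1 - l)) * 1 + 2 * (1 - l) * (1 + U) := hgm
        _ = 1 + 2 * (1 - l) * U := by ring
    have h6 : 2 * (1 - l) * Real.log (1 + U) ≤ Real.log (1 + 2 * (1 - l) * U) := by
      rw [← Real.log_rpow (by positivity)]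
      exact Real.log_le_log (by positivity) h5
    have hθU : 1 + 2 * (1 - l) * U = 1 + (1 - l) * b / a := by
      rw [hUdef]; field_simp
    rw [hθU] at h6
    have hlog2 : Real.log 2 < 0.6931471808 := Real.log_two_lt_d9
    have hD : (3 / 4) * L + 1 - Real.log a / 2 ≤ Real.log (1 + U) := by
      have h7 : Real.log U ≤ Real.log (1 + U) := Real.log_le_log hU0 (by linarith)
      have h8 : Real.log U = L - (Real.log 2 + Real.log a) := by
        rw [hUdef, Real.log_div (ne_of_gt hb0) (by positivity),
          Real.log_mul two_ne_zero (ne_of_gt ha)]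
      linarith
    have key := mul_le_mul_of_nonneg_left hD hθ0
    nlinarith [mul_nonneg (mul_nonneg hs.le hs.le) hL0.le]


/-- Relative uniform convexity of the negative Burg entropy
`b(z) = −Σ log z_k` on `U = (0,∞)ⁿ` with an arbitrary norm `N` on `ℝⁿ`: for every
`x ∈ U` there exists `r_x > 0` such that for every `y ∈ U` with `N y > r_x` and every
`λ ∈ (0,1)`,
`b(λx + (1−λ)y) + λ(1−λ)(1/4)log(1 + N(x−y)) ≤ λ b(x) + (1−λ) b(y)`. -/
theorem burg_entropy_relative_uniform_convexity
    (n : ℕ) (hn : 1 ≤ n) (N : (Fin n → ℝ) → ℝ)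
    (hN_add : ∀ v w : Fin n → ℝ, N (v + w) ≤ N v + N w)
    (hN_smul : ∀ (a : ℝ) (v : Fin n → ℝ), N (a • v) = |a| * N v)
    (hN_def : ∀ v : Fin n → ℝ, N v = 0 → v = 0) :
    ∀ x : Fin n → ℝ, (∀ k, 0 < x k) →
    ∃ r : ℝ, 0 < r ∧
      ∀ y : Fin n → ℝ, (∀ k, 0 < y k) → r < N y →
      ∀ l ∈ Set.Ioo (0:ℝ) 1,
        (-∑ k, Real.log (l * x k + (1 - l) * y k))
            + l * (1 - l) * (1 / 4) * Real.log (1 + N (x - y))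
          ≤ l * (-∑ k, Real.log (x k))
            + (1 - l) * (-∑ k, Real.log (y k)) := by
  intro x hx
  have hne : Nonempty (Fin n) := ⟨⟨0, by omega⟩⟩
  have hN0 : N 0 = 0 := by
    have h := hN_smul 0 0
    rw [zero_smul] at h
    simpa using h
  have hNneg : ∀ v : Fin n → ℝ, N (-v) = N v := by
    intro v
    have h := hN_smul (-1) v
    rw [neg_one_smul] at h
    simpa using h
  have hNnonneg : ∀ v : Fin n → ℝ, 0 ≤ N v := by
    intro v
    have h := hN_add v (-v)
    rw [add_neg_cancel, hN0, hNneg] at h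
    linarith
  have hNsum : ∀ (s : Finset (Fin n)) (f : Fin n → Fin n → ℝ),
      N (∑ k ∈ s, f k) ≤ ∑ k ∈ s, N (f k) := by
    intro s f
    induction s using Finset.cons_induction with
    | empty => simp [hN0]
    | cons k s hk ih =>
      rw [Finset.sum_cons, Finset.sum_cons]
      exact le_trans (hN_add _ _) (by linarith)
  have hNcoord : ∀ v : Fin n → ℝ, N v ≤ ∑ k, |v k| * N (Pi.single k 1) := by
    intro v
    have hv : v = ∑ k, v k • (Pi.single k 1 : Fin n → ℝ) := by
      ext j
      simp [Pi.single_apply]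
    calc N v = N (∑ k, v k • (Pi.single k 1 : Fin n → ℝ)) := by rw [← hv]
      _ ≤ ∑ k, N (v k • (Pi.single k 1 : Fin n → ℝ)) := hNsum _ _
      _ = ∑ k, |v k| * N (Pi.single k 1) :=
          Finset.sum_congr rfl fun k _ => hN_smul _ _
  have hCk : ∀ k, 0 < N (Pi.single k 1) := by
    intro k
    rcases (hNnonneg (Pi.single k 1)).lt_or_eq with h | h
    · exact h
    · exfalso
      have h1 := congrFun (hN_def _ h.symm) k
      simp at h1
  obtain ⟨C, hCdef⟩ : ∃ C : ℝ, C = ∑ k, N (Pi.single k 1) := ⟨_, rfl⟩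
  have hC : 0 < C := hCdef ▸ Finset.sum_pos (fun k _ => hCk k) Finset.univ_nonempty
  obtain ⟨E, hEdef⟩ : ∃ E : ℝ, E = ∑ k, |Real.log (x k)| := ⟨_, rfl⟩
  obtain ⟨K, hKdef⟩ : ∃ K : ℝ, K = 1 + N x + C := ⟨_, rfl⟩
  have hK1 : 1 ≤ K := by have := hNnonneg x; rw [hKdef]; linarith
  have hexp : 0 < Real.exp (7 + 2 * E) := Real.exp_pos _
  refine ⟨C * (K + Real.exp (7 + 2 * E) + 2), by nlinarith, ?_⟩
  intro y hy hr l hl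
  obtain ⟨hl0, hl1⟩ := hl
  obtain ⟨k₀, -, hk₀⟩ := Finset.exists_max_image Finset.univ y Finset.univ_nonempty
  have hb0 : 0 < y k₀ := hy k₀
  have hNy : N y ≤ y k₀ * C := by
    rw [hCdef, Finset.mul_sum]
    refine le_trans (hNcoord y) (Finset.sum_le_sum fun k _ => ?_)
    rw [abs_of_pos (hy k)]
    exact mul_le_mul_of_nonneg_right (hk₀ k (Finset.mem_univ k)) (hNnonneg _)
  have hrb : K + Real.exp (7 + 2 * E) + 2 < y k₀ := by
    have h1 : C * (K + Real.exp (7 + 2 * E) + 2) < y k₀ * C := lt_of_lt_of_le hr hNy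
    nlinarith
  have hb1 : 1 < y k₀ := by linarith
  have hbK : K ≤ y k₀ := by linarith
  have hlogb0 : 0 < Real.log (y k₀) := Real.log_pos hb1
  have hlogbE : 7 + 2 * E ≤ Real.log (y k₀) := by
    rw [Real.le_log_iff_exp_le (by linarith)]
    linarith
  have hgauge : Real.log (1 + N (x - y)) ≤ 2 * Real.log (y k₀) := by
    have h1 : N (x - y) ≤ N x + N y := by
      have h := hN_add x (-y)
      rw [hNneg] at h
      simpa [sub_eq_add_neg] using h
    have h2 : 1 + N (x - y) ≤ y k₀ * K := by
      have hx0 := hNnonneg x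
      nlinarith
    have h3 : Real.log (1 + N (x - y)) ≤ Real.log (y k₀ * K) :=
      Real.log_le_log (by linarith [hNnonneg (x - y)]) h2
    rw [Real.log_mul (by linarith) (by linarith)] at h3
    have h4 : Real.log K ≤ Real.log (y k₀) := Real.log_le_log (by linarith) hbK
    linarith
  have hg : ∀ k, l * Real.log (x k) + (1 - l) * Real.log (y k)
      ≤ Real.log (l * x k + (1 - l) * y k) := by
    intro k
    have hgm := Real.geom_mean_le_arith_mean2_weighted (w₁ := l) (w₂ := 1 - l)
      (p₁ := x k) (p₂ := y k) hl0.le (by linarith) (hx k).le (hy k).le (by ring)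
    have hp1 : (0:ℝ) < x k ^ l := Real.rpow_pos_of_pos (hx k) l
    have hp2 : (0:ℝ) < y k ^ (1 - l) := Real.rpow_pos_of_pos (hy k) (1 - l)
    have h := Real.log_le_log (mul_pos hp1 hp2) hgm
    rwa [Real.log_mul (ne_of_gt hp1) (ne_of_gt hp2),
      Real.log_rpow (hx k), Real.log_rpow (hy k)] at h
  have hk0gap : l * Real.log (x k₀) + (1 - l) * Real.log (y k₀)
      + l * (1 - l) * (1 / 2) * Real.log (y k₀)
      ≤ Real.log (l * x k₀ + (1 - l) * y k₀) := by
    apply burg_core _ _ _ (hx k₀) hb1 hl0 hl1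
    have h1 : |Real.log (x k₀)| ≤ E := by
      rw [hEdef]
      exact Finset.single_le_sum (f := fun i => |Real.log (x i)|)
        (fun i _ => abs_nonneg _) (Finset.mem_univ k₀)
    have h2 := le_abs_self (Real.log (x k₀))
    linarith
  have hsum : l * (1 - l) * (1 / 2) * Real.log (y k₀) ≤
      ∑ k, (Real.log (l * x k + (1 - l) * y k)
        - (l * Real.log (x k) + (1 - l) * Real.log (y k))) := by
    have h1 := Finset.single_le_sum
      (f := fun k => Real.log (l * x k + (1 - l) * y k)
        - (l * Real.log (x k) + (1 - l) * Real.log (y k)))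
      (fun k _ => by have := hg k; linarith) (Finset.mem_univ k₀)
    linarith only [h1, hk0gap]
  have hfac : (0:ℝ) ≤ l * (1 - l) * (1 / 4) := by nlinarith
  have hmain : l * (1 - l) * (1 / 4) * Real.log (1 + N (x - y))
      ≤ l * (1 - l) * (1 / 2) * Real.log (y k₀) := by
    have := mul_le_mul_of_nonneg_left hgauge hfac
    nlinarith [this]
  have hsplit : ∑ k, (Real.log (l * x k + (1 - l) * y k)
        - (l * Real.log (x k) + (1 - l) * Real.log (y k)))
      = (∑ k, Real.log (l * x k + (1 - l) * y k))
        - (l * ∑ k, Real.log (x k) + (1 - l) * ∑ k, Real.log (y k)) := by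
    rw [Finset.sum_sub_distrib, Finset.sum_add_distrib, Finset.mul_sum, Finset.mul_sum]
  rw [hsplit] at hsum
  nlinarith [hsum, hmain]
end

section
/- Let n ≥ 1, let q < 0, let U := (0,∞)ⁿ, and define the negative Havrda–Charvát–Tsallis entropy b(z) := (1/(1−q)) Σ_{k=1}^n (z_k^q − 1) for z ∈ U, whose Bregman divergence is B(x,y) := (1/(1−q)) Σ_{k=1}^n (x_k^q − y_k^q − q·y_k^{q−1}·(x_k − y_k)) for x, y ∈ U. Then for every x ∈ [1,∞)ⁿ and every γ > max{ n·x_k^q/(1−q) : k ∈ {1,…,n} }, there exists t₀ > 0 such that (t₀,∞)ⁿ ⊆ {y ∈ U : B(x,y) ≤ γ}; in particular, the level set {y ∈ U : B(x,y) ≤ γ} is unbounded (with respect to any norm on ℝⁿ). -/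
/-- For the negative Havrda–Charvát–Tsallis entropy with `q < 0`,
whose Bregman divergence is
`B(x,y) = (1/(1−q)) Σ (x_k^q − y_k^q − q y_k^{q−1}(x_k − y_k))`, for every
`x ∈ [1,∞)ⁿ` and every `γ > max_k n·x_k^q/(1−q)` there exists `t₀ > 0` with
`(t₀,∞)ⁿ ⊆ {y ∈ (0,∞)ⁿ : B(x,y) ≤ γ}`; in particular, this level set is unbounded. -/
theorem hct_entropy_level_set_unbounded_for_negative_q
    (n : ℕ) (hn : 1 ≤ n) (q : ℝ) (hq : q < 0) :
    ∀ x : Fin n → ℝ, (∀ k, 1 ≤ x k) →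
    ∀ γ : ℝ, (∀ k, (n : ℝ) * x k ^ q / (1 - q) < γ) →
    ∃ t₀ : ℝ, 0 < t₀ ∧
      (∀ y : Fin n → ℝ, (∀ k, t₀ < y k) →
        (1 / (1 - q)) * ∑ k, (x k ^ q - y k ^ q - q * y k ^ (q - 1) * (x k - y k)) ≤ γ) ∧
      ¬ Bornology.IsBounded {y : Fin n → ℝ | (∀ k, 0 < y k) ∧
        (1 / (1 - q)) * ∑ k, (x k ^ q - y k ^ q - q * y k ^ (q - 1) * (x k - y k)) ≤ γ} := by
  intro x hx γ hγ
  haveI : Nonempty (Fin n) := Fin.pos_iff_nonempty.mp (by omega)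
  have hq1 : (0:ℝ) < 1 - q := by linarith
  have hn0 : (0:ℝ) < n := by exact_mod_cast Nat.lt_of_lt_of_le Nat.zero_lt_one hn
  have hne : (Finset.univ : Finset (Fin n)).Nonempty := Finset.univ_nonempty
  set t₀ := Finset.univ.sup' hne x with ht₀def
  have ht₀x : ∀ k, x k ≤ t₀ := fun k => Finset.le_sup' x (Finset.mem_univ k)
  have ht₀pos : 0 < t₀ := lt_of_lt_of_le zero_lt_one ((hx (Classical.arbitrary _)).trans (ht₀x _))
  -- sum of x k ^ q is < γ * (1 - q)
  have hsum : ∑ k, x k ^ q < γ * (1 - q) := by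
    have h1 : ∀ k ∈ Finset.univ, x k ^ q < γ * (1 - q) / n := by
      intro k _
      have := hγ k
      rw [div_lt_iff₀ hq1] at this
      rw [lt_div_iff₀ hn0]
      nlinarith
    calc ∑ k, x k ^ q < ∑ _k : Fin n, γ * (1 - q) / n :=
          Finset.sum_lt_sum_of_nonempty hne h1
      _ = γ * (1 - q) := by
          rw [Finset.sum_const, Finset.card_univ, Fintype.card_fin, nsmul_eq_mul]
          field_simp
  have key : ∀ y : Fin n → ℝ, (∀ k, t₀ < y k) →
      (1 / (1 - q)) * ∑ k, (x k ^ q - y k ^ q - q * y k ^ (q - 1) * (x k - y k)) ≤ γ := by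
    intro y hy
    have hterm : ∀ k ∈ Finset.univ,
        x k ^ q - y k ^ q - q * y k ^ (q - 1) * (x k - y k) ≤ x k ^ q := by
      intro k _
      have hyk : 0 < y k := ht₀pos.trans (hy k)
      have h1 : 0 < y k ^ q := Real.rpow_pos_of_pos hyk q
      have h2 : 0 < y k ^ (q - 1) := Real.rpow_pos_of_pos hyk (q - 1)
      have h3 : x k - y k ≤ 0 := by have := (ht₀x k).trans_lt (hy k); linarith
      nlinarith [mul_nonneg (mul_nonneg (neg_nonneg.mpr hq.le) h2.le) (neg_nonneg.mpr h3)]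
    have hS : ∑ k, (x k ^ q - y k ^ q - q * y k ^ (q - 1) * (x k - y k)) ≤ ∑ k, x k ^ q :=
      Finset.sum_le_sum hterm
    have hγ1q : ∑ k, (x k ^ q - y k ^ q - q * y k ^ (q - 1) * (x k - y k)) ≤ γ * (1 - q) :=
      hS.trans hsum.le
    rw [one_div, inv_mul_le_iff₀ hq1]
    linarith [hγ1q]
  refine ⟨t₀, ht₀pos, key, ?_⟩
  intro hb
  rw [isBounded_iff_forall_norm_le] at hb
  obtain ⟨C, hC⟩ := hb
  set m := max (t₀ + 1) (C + 1) with hm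
  have hmt : t₀ < m := lt_of_lt_of_le (by linarith) (le_max_left _ _)
  have hmem : (fun _ : Fin n => m) ∈ {y : Fin n → ℝ | (∀ k, 0 < y k) ∧
      (1 / (1 - q)) * ∑ k, (x k ^ q - y k ^ q - q * y k ^ (q - 1) * (x k - y k)) ≤ γ} :=
    ⟨fun k => ht₀pos.trans hmt, key _ (fun k => hmt)⟩
  have hnorm := hC _ hmem
  rw [pi_norm_const] at hnorm
  have : C + 1 ≤ m := le_max_right _ _
  have hm0 : 0 ≤ m := le_of_lt (ht₀pos.trans hmt)
  rw [Real.norm_eq_abs, abs_of_nonneg hm0] at hnorm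
  linarith
end

section
/- Let n ≥ 1, let ‖·‖ be an arbitrary norm on ℝⁿ, let U := (1,∞)ⁿ, and define the negative iterated log entropy b(z) := −Σ_{k=1}^n log(log(z_k)) for z ∈ U, whose Bregman divergence is B(x,y) := Σ_{k=1}^n [ log(log(y_k)/log(x_k)) + (x_k − y_k)/(y_k·log(y_k)) ] for x, y ∈ U. Then for every x ∈ U and every γ ∈ ℝ, the level set {y ∈ U : B(x,y) ≤ γ} is bounded. -/
open Real

/-- Termwise nonnegativity of the Bregman divergence of `-log log`. -/
lemma bregman_term_nonneg {x t : ℝ} (hx : 1 < x) (ht : 1 < t) :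
    0 ≤ Real.log (Real.log t / Real.log x) + (x - t) / (t * Real.log t) := by
  have hlx : 0 < Real.log x := Real.log_pos hx
  have hlt : 0 < Real.log t := Real.log_pos ht
  have ht0 : 0 < t := lt_trans one_pos ht
  have hx0 : 0 < x := lt_trans one_pos hx
  -- log (lx / lt) ≤ lx/lt - 1
  have h1 : Real.log (Real.log x / Real.log t) ≤ Real.log x / Real.log t - 1 :=
    Real.log_le_sub_one_of_pos (div_pos hlx hlt)
  have h1' : Real.log (Real.log x) - Real.log (Real.log t)
      ≤ (Real.log x - Real.log t) / Real.log t := by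
    rw [Real.log_div hlx.ne' hlt.ne'] at h1
    have : Real.log x / Real.log t - 1 = (Real.log x - Real.log t) / Real.log t := by
      field_simp
    linarith [this ▸ h1]
  -- log x - log t ≤ (x - t)/t
  have h2 : Real.log x - Real.log t ≤ (x - t) / t := by
    have := Real.log_le_sub_one_of_pos (div_pos hx0 ht0)
    rw [Real.log_div hx0.ne' ht0.ne'] at this
    have h3 : x / t - 1 = (x - t) / t := by field_simp
    linarith [h3 ▸ this]
  rw [Real.log_div hlt.ne' hlx.ne']
  have hA : (Real.log t - Real.log x) / Real.log t
      ≤ Real.log (Real.log t) - Real.log (Real.log x) := by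
    have := h1'
    have hneg : (Real.log x - Real.log t) / Real.log t
        = -((Real.log t - Real.log x) / Real.log t) := by ring
    linarith [hneg ▸ this]
  have hB : (x - t) / (t * Real.log t) = ((x - t) / t) / Real.log t := by
    field_simp
  rw [hB]
  have hsum : 0 ≤ (Real.log t - Real.log x) / Real.log t + ((x - t) / t) / Real.log t := by
    have : (Real.log t - Real.log x) / Real.log t + ((x - t) / t) / Real.log t
        = ((Real.log t - Real.log x) + (x - t) / t) / Real.log t := by ring
    rw [this]
    apply div_nonneg _ hlt.le
    linarith
  linarith

/-- If a single term is ≤ γ, then t is bounded. -/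
lemma bregman_term_bound {x t γ : ℝ} (hx : 1 < x) (ht : 1 < t)
    (h : Real.log (Real.log t / Real.log x) + (x - t) / (t * Real.log t) ≤ γ) :
    t ≤ max x (Real.exp (Real.log x * Real.exp (γ + 1 / Real.log x))) := by
  rcases le_or_gt t x with hc | hc
  · exact le_max_of_le_left hc
  · apply le_max_of_le_right
    -- t > x. Then (t - x)/(t log t) ≤ 1/log t ≤ 1/log x.
    have hlx : 0 < Real.log x := Real.log_pos hx
    have hlt : 0 < Real.log t := Real.log_pos ht
    have ht0 : 0 < t := lt_trans one_pos ht
    have hltx : Real.log x ≤ Real.log t := Real.log_le_log (lt_trans one_pos hx) hc.le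
    have h4 : (t - x) / (t * Real.log t) ≤ 1 / Real.log x := by
      have h5 : (t - x) / (t * Real.log t) ≤ 1 / Real.log t := by
        rw [div_le_div_iff₀ (by positivity) hlt]
        nlinarith [lt_trans one_pos hx]
      have h6 : 1 / Real.log t ≤ 1 / Real.log x := one_div_le_one_div_of_le hlx hltx
      linarith
    have h7 : Real.log (Real.log t / Real.log x) ≤ γ + 1 / Real.log x := by
      have : -((x - t) / (t * Real.log t)) = (t - x) / (t * Real.log t) := by ring
      linarith [this ▸ h4]
    have h8 : Real.log t / Real.log x ≤ Real.exp (γ + 1 / Real.log x) := by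
      calc Real.log t / Real.log x = Real.exp (Real.log (Real.log t / Real.log x)) :=
            (Real.exp_log (div_pos hlt hlx)).symm
        _ ≤ Real.exp (γ + 1 / Real.log x) := Real.exp_le_exp.mpr h7
    have h9 : Real.log t ≤ Real.log x * Real.exp (γ + 1 / Real.log x) := by
      rw [div_le_iff₀ hlx] at h8
      linarith [h8]
    calc t = Real.exp (Real.log t) := (Real.exp_log ht0).symm
      _ ≤ Real.exp (Real.log x * Real.exp (γ + 1 / Real.log x)) := Real.exp_le_exp.mpr h9

/-- For the negative iterated log entropy
`b(z) = −Σ log(log z_k)` on `U = (1,∞)ⁿ`, whose Bregman divergence is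
`B(x,y) = Σ [log(log y_k / log x_k) + (x_k − y_k)/(y_k log y_k)]`, every level set
`{y ∈ U : B(x,y) ≤ γ}` (for `x ∈ U`, `γ ∈ ℝ`) is bounded. -/
theorem iterated_log_entropy_level_sets_bounded
    (n : ℕ) (hn : 1 ≤ n) :
    ∀ x : Fin n → ℝ, (∀ k, 1 < x k) → ∀ γ : ℝ,
      Bornology.IsBounded {y : Fin n → ℝ | (∀ k, 1 < y k) ∧
        (∑ k, (Real.log (Real.log (y k) / Real.log (x k))
          + (x k - y k) / (y k * Real.log (y k)))) ≤ γ} := by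
  intro x hx γ
  set M : Fin n → ℝ :=
    fun k => max (x k) (Real.exp (Real.log (x k) * Real.exp (γ + 1 / Real.log (x k)))) with hM
  apply (Metric.isBounded_Icc (fun _ : Fin n => (1 : ℝ)) M).subset
  rintro y ⟨hy, hsum⟩
  rw [← Set.pi_univ_Icc]
  intro k _
  constructor
  · exact (hy k).le
  · -- the k-th term is ≤ γ since all terms are nonnegative
    have hterm : Real.log (Real.log (y k) / Real.log (x k))
        + (x k - y k) / (y k * Real.log (y k)) ≤ γ := by
      refine le_trans ?_ hsum
      exact Finset.single_le_sum
        (fun j _ => bregman_term_nonneg (hx j) (hy j)) (Finset.mem_univ k)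
    exact bregman_term_bound (hx k) (hy k) hterm
end
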